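/- arXiv:2507.15808 — 4 statements merged into one kernel-verified Lean document; each statement's English description precedes it below -/
import Mathlib

section
/- Let n ≥ 2 and let c_* ∈ ℝ \ {0}. For every i = 1, 2, …, n, the linear map Φ_i : ℝⁿ × ℝ^{n_*−n} → Sym_n defined by Φ_i(α, β) = c_* α ⊙ ξ_i + Σ_{j=n+1}^{n_*} β_{j−n} ξ_j ⊗ ξ_j is a linear isomorphism, where α ⊙ ξ_i := (1/2)(α ⊗ ξ_i + ξ_i ⊗ α). -/
/-! `Φ_i` is injective: the term `α ⊙ e_i` only touches row and column `i`, so for `k < l` both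
different from `i` the entry `(k, l)` of `Φ_i(α, β)` is `β_{kl}/2`; then the diagonal entry
`(a, a)`, `a ≠ i`, is `β_{ai}/2`, and once `β = 0` the entries `(k, i)` give `α`. The image lies in
`Sym_n`, and a symmetric matrix is determined by its diagonal and strictly upper triangular entries,
which form a vector of the same space `ℝⁿ × ℝ^{n_*-n}`. Reading them off after `Φ_i` is therefore
an injective, hence surjective, endomorphism, so every symmetric matrix is attained. -/

open MeasureTheory

attribute [local instance] Matrix.normedAddCommGroup Matrix.normedSpace

noncomputable section

/-- Index set for the vectors `ξ_1, …, ξ_{n_*}`: pairs `(i, j)` with `i ≤ j`. -/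
abbrev PairIdx (n : ℕ) := {p : Fin n × Fin n // p.1 ≤ p.2}

/-- The unit vectors `ξ = (e_i + e_j)/|e_i + e_j|` for `i ≤ j`; in particular `ξ = e_i`
for the diagonal pairs. -/
def xiVec {n : ℕ} (p : PairIdx n) : Fin n → ℝ :=
  if p.1.1 = p.1.2 then Pi.single p.1.1 1
  else (Real.sqrt 2)⁻¹ • (Pi.single p.1.1 (1 : ℝ) + Pi.single p.1.2 (1 : ℝ))

/-- The positive definite matrix `h_* = Σ_{i=1}^{n_*} ξ_i ⊗ ξ_i`. -/
def hStar (n : ℕ) : Matrix (Fin n) (Fin n) ℝ :=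
  ∑ p : PairIdx n, Matrix.vecMulVec (xiVec p) (xiVec p)
/-- The linear map `Φ_i(α, β) = c_* α ⊙ ξ_i + Σ_{j>n} β_j ξ_j ⊗ ξ_j`, where
`α ⊙ ξ := (1/2)(α ⊗ ξ + ξ ⊗ α)` and the off-diagonal vectors `ξ_j`, `j = n+1, …, n_*`,
are indexed by pairs `p.1 < p.2`. -/
def Phi (n : ℕ) (c : ℝ) (i : Fin n)
    (αβ : (Fin n → ℝ) × ({p : Fin n × Fin n // p.1 < p.2} → ℝ)) :
    Matrix (Fin n) (Fin n) ℝ :=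
  c • ((2 : ℝ)⁻¹ • (Matrix.vecMulVec αβ.1 (Pi.single i 1) +
      Matrix.vecMulVec (Pi.single i 1) αβ.1)) +
    ∑ p : {p : Fin n × Fin n // p.1 < p.2}, αβ.2 p •
      Matrix.vecMulVec (xiVec ⟨p.1, le_of_lt p.2⟩) (xiVec ⟨p.1, le_of_lt p.2⟩)

open Function Matrix

section UpperEntries

variable {ι R : Type*} [LinearOrder ι] [Semiring R]

theorem sym2_mk_injective_of_lt :
    Injective fun p : {p : ι × ι // p.1 < p.2} => s(p.1.1, p.1.2) := by
  rintro ⟨⟨a, b⟩, hab⟩ ⟨⟨c, d⟩, hcd⟩ h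
  obtain ⟨rfl, rfl⟩ | ⟨rfl, rfl⟩ := Sym2.eq_iff.mp h
  · rfl
  · exact absurd (hab.trans hcd) (lt_irrefl _)

theorem eq_of_mem_sym2_of_lt {p q : {p : ι × ι // p.1 < p.2}} {a b : ι} (hab : a ≠ b)
    (hp : a ∈ s(p.1.1, p.1.2) ∧ b ∈ s(p.1.1, p.1.2))
    (hq : a ∈ s(q.1.1, q.1.2) ∧ b ∈ s(q.1.1, q.1.2)) : p = q :=
  sym2_mk_injective_of_lt
    (((Sym2.mem_and_mem_iff hab).mp hp).trans ((Sym2.mem_and_mem_iff hab).mp hq).symm)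

def upperEntries : Matrix ι ι R →ₗ[R] (ι → R) × ({p : ι × ι // p.1 < p.2} → R) where
  toFun A := (A.diag, fun p => A p.1.1 p.1.2)
  map_add' _ _ := rfl
  map_smul' _ _ := rfl

theorem upperEntries_injOn_isSymm :
    Set.InjOn (upperEntries : Matrix ι ι R →ₗ[R] _) {A | A.IsSymm} := by
  intro A hA B hB h
  have hupper (p : {p : ι × ι // p.1 < p.2}) : A p.1.1 p.1.2 = B p.1.1 p.1.2 :=
    congr_fun (congr_arg Prod.snd h) p
  ext k l
  rcases lt_trichotomy k l with hkl | rfl | hkl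
  · exact hupper ⟨(k, l), hkl⟩
  · exact congr_fun (congr_arg Prod.fst h) k
  · rw [← hA.apply, ← hB.apply]
    exact hupper ⟨(l, k), hkl⟩

end UpperEntries

theorem LinearMap.range_eq_of_injOn {K V W : Type*} [Field K] [AddCommGroup V] [Module K V]
    [AddCommGroup W] [Module K W] [FiniteDimensional K V] {f : V →ₗ[K] W} {g : W →ₗ[K] V}
    {S : Set W} (hf : Injective f) (hfS : Set.range f ⊆ S) (hg : Set.InjOn g S) :
    Set.range f = S := by
  refine hfS.antisymm fun w hw => ?_
  have hgf : Surjective (g ∘ₗ f) :=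
    LinearMap.injective_iff_surjective.mp fun x y h =>
      hf (hg (hfS ⟨x, rfl⟩) (hfS ⟨y, rfl⟩) h)
  obtain ⟨v, hv⟩ := hgf (g w)
  exact ⟨v, hg (hfS ⟨v, rfl⟩) hw hv⟩

abbrev OffIdx (n : ℕ) := {p : Fin n × Fin n // p.1 < p.2}

section Phi

variable {n : ℕ}

theorem xiVec_apply_of_lt (p : OffIdx n) (k : Fin n) :
    xiVec ⟨p.1, p.2.le⟩ k = if k ∈ s(p.1.1, p.1.2) then (√2)⁻¹ else 0 := by
  have hne : p.1.1 ≠ p.1.2 := p.2.ne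
  simp only [xiVec, hne, if_false, Pi.smul_apply, Pi.add_apply, Pi.single_apply, Sym2.mem_iff,
    smul_eq_mul]
  split_ifs <;> simp_all

theorem xiVec_mul_xiVec_of_lt (p : OffIdx n) (k l : Fin n) :
    xiVec ⟨p.1, p.2.le⟩ k * xiVec ⟨p.1, p.2.le⟩ l =
      if k ∈ s(p.1.1, p.1.2) ∧ l ∈ s(p.1.1, p.1.2) then 2⁻¹ else 0 := by
  rw [xiVec_apply_of_lt, xiVec_apply_of_lt]
  split_ifs <;> simp_all [← mul_inv, Real.mul_self_sqrt]

theorem Phi_apply (c : ℝ) (i : Fin n) (x : (Fin n → ℝ) × (OffIdx n → ℝ)) (k l : Fin n) :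
    Phi n c i x k l = c / 2 * (x.1 k * (if l = i then 1 else 0) + (if k = i then 1 else 0) * x.1 l)
      + ∑ p : OffIdx n, if k ∈ s(p.1.1, p.1.2) ∧ l ∈ s(p.1.1, p.1.2) then x.2 p / 2 else 0 := by
  simp only [Phi, Matrix.add_apply, Matrix.smul_apply, Matrix.sum_apply, vecMulVec_apply,
    Pi.single_apply, smul_eq_mul, xiVec_mul_xiVec_of_lt, mul_ite, mul_zero]
  ring_nf

theorem Phi_isLinearMap (c : ℝ) (i : Fin n) : IsLinearMap ℝ (Phi n c i) := by
  refine ⟨fun x y => ?_, fun t x => ?_⟩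
  · simp only [Phi, Prod.fst_add, Prod.snd_add, Pi.add_apply, add_vecMulVec, vecMulVec_add,
      add_smul, Finset.sum_add_distrib]
    module
  · simp only [Phi, Prod.smul_fst, Prod.smul_snd, Pi.smul_apply, smul_vecMulVec, vecMulVec_smul,
      smul_eq_mul, mul_smul, ← Finset.smul_sum]
    module

theorem Phi_isSymm (c : ℝ) (i : Fin n) (x : (Fin n → ℝ) × (OffIdx n → ℝ)) :
    (Phi n c i x).IsSymm := by
  simp only [IsSymm, Phi, transpose_add, transpose_smul, transpose_sum, transpose_vecMulVec,
    add_comm (vecMulVec (Pi.single i 1) x.1)]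

theorem snd_eq_zero_of_Phi_eq_zero_of_notMem {c : ℝ} {i : Fin n}
    {x : (Fin n → ℝ) × (OffIdx n → ℝ)} (hx : Phi n c i x = 0) {p : OffIdx n}
    (hi : i ∉ s(p.1.1, p.1.2)) : x.2 p = 0 := by
  have h := congr_fun₂ hx p.1.1 p.1.2
  have h1 : p.1.1 ≠ i := fun h => hi (h ▸ Sym2.mem_mk_left _ _)
  have h2 : p.1.2 ≠ i := fun h => hi (h ▸ Sym2.mem_mk_right _ _)
  have hmem (q : OffIdx n) :
      p.1.1 ∈ s(q.1.1, q.1.2) ∧ p.1.2 ∈ s(q.1.1, q.1.2) ↔ p = q :=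
    ⟨eq_of_mem_sym2_of_lt p.2.ne ⟨Sym2.mem_mk_left _ _, Sym2.mem_mk_right _ _⟩,
      fun h => h ▸ ⟨Sym2.mem_mk_left _ _, Sym2.mem_mk_right _ _⟩⟩
  simp_rw [Phi_apply, hmem, Finset.sum_ite_eq, h1, h2] at h
  simpa using h

theorem snd_eq_zero_of_Phi_eq_zero {c : ℝ} {i : Fin n} {x : (Fin n → ℝ) × (OffIdx n → ℝ)}
    (hx : Phi n c i x = 0) : x.2 = 0 := by
  funext p
  by_cases hi : i ∉ s(p.1.1, p.1.2)
  · exact snd_eq_zero_of_Phi_eq_zero_of_notMem hx hi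
  obtain ⟨a, hpa⟩ := Sym2.mem_iff_exists.mp (not_not.mp hi)
  have hai : a ≠ i := by
    rintro rfl
    exact p.2.ne (Sym2.mk_isDiag_iff.mp (hpa ▸ Sym2.mk_isDiag_iff.mpr rfl))
  have h := congr_fun₂ hx a a
  rw [Phi_apply, Finset.sum_eq_single p] at h
  · simpa [hai, hpa] using h
  · intro q _ hqp
    by_cases hiq : i ∈ s(q.1.1, q.1.2)
    · rw [if_neg]
      rintro ⟨haq, -⟩
      exact hqp (eq_of_mem_sym2_of_lt hai ⟨haq, hiq⟩ (by simp [hpa]))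
    · simp [snd_eq_zero_of_Phi_eq_zero_of_notMem hx hiq]
  · simp

theorem eq_zero_of_Phi_eq_zero {c : ℝ} (hc : c ≠ 0) {i : Fin n}
    {x : (Fin n → ℝ) × (OffIdx n → ℝ)} (hx : Phi n c i x = 0) : x = 0 := by
  have hβ := snd_eq_zero_of_Phi_eq_zero hx
  refine Prod.ext (funext fun k => ?_) hβ
  have h := congr_fun₂ hx k i
  rw [Phi_apply, hβ] at h
  by_cases hk : k = i
  · subst hk
    simpa [hc] using h
  · simpa [hc, hk] using h

end Phi

theorem statement9_general (n : ℕ) (c : ℝ) (hc : c ≠ 0) (i : Fin n) :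
    IsLinearMap ℝ (Phi n c i) ∧ Function.Injective (Phi n c i) ∧
    Set.range (Phi n c i) = {A : Matrix (Fin n) (Fin n) ℝ | A.IsSymm} := by
  have hlin := Phi_isLinearMap c i
  have hinj : Injective (Phi n c i) :=
    (injective_iff_map_eq_zero (hlin.mk' _)).mpr fun _ => eq_zero_of_Phi_eq_zero hc
  exact ⟨hlin, hinj, LinearMap.range_eq_of_injOn (f := hlin.mk' _) hinj
    (Set.range_subset_iff.mpr (Phi_isSymm c i)) upperEntries_injOn_isSymm⟩

/-- Lemma 2.3: `Φ_i` is a linear isomorphism onto `Sym_n`. -/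
theorem statement9 (n : ℕ) (hn : 2 ≤ n) (c : ℝ) (hc : c ≠ 0) (i : Fin n) :
    IsLinearMap ℝ (Phi n c i) ∧ Function.Injective (Phi n c i) ∧
    Set.range (Phi n c i) = {A : Matrix (Fin n) (Fin n) ℝ | A.IsSymm} :=
  statement9_general n c hc i
end
end

section
/- There exist a constant ε_* > 0 and a function Γ = (Γ₁, Γ₂) ∈ C^∞([0, ε_*] × ℝ, ℝ²) such that for every (s,t) ∈ [0, ε_*] × ℝ: Γ(s, t + 2π) = Γ(s, t) and (1 + ∂_t Γ₁(s,t))² + (∂_t Γ₂(s,t))² = 1 + s², and for every i ≥ 0 there is a constant C(i) such that sup_t |∂_t^i Γ₁(s,t)| ≤ C(i) s², sup_t |∂_t^i Γ₂(s,t)| ≤ C(i) s, sup_t |∂_s ∂_t^i Γ₁(s,t)| ≤ C(i) s, sup_t |∂_s ∂_t^i Γ₂(s,t)| ≤ C(i), and sup_t |∂_s² ∂_t^i Γ(s,t)| ≤ C(i), for all s ∈ [0, ε_*]. -/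
noncomputable section

open Real Set

namespace Stmt13

/-! ### The corrugation profile -/

def rr (s : ℝ) : ℝ := Real.sqrt (1 + s ^ 2)
def ww (s : ℝ) : ℝ := s * (Real.sqrt (rr s + rr s ^ 2))⁻¹

lemma rr_sq (s : ℝ) : rr s ^ 2 = 1 + s ^ 2 := Real.sq_sqrt (by positivity)

lemma one_le_rr (s : ℝ) : 1 ≤ rr s := by
  have : (1:ℝ) = Real.sqrt 1 := by simp
  rw [this]; exact Real.sqrt_le_sqrt (by nlinarith)

lemma rr_pos (s : ℝ) : 0 < rr s := lt_of_lt_of_le one_pos (one_le_rr s)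

lemma ww_sq (s : ℝ) : ww s ^ 2 * rr s = rr s - 1 := by
  have h1 : (0:ℝ) < rr s + rr s ^ 2 := by have := rr_pos s; nlinarith
  have h2 : (Real.sqrt (rr s + rr s ^ 2)) ^ 2 = rr s + rr s ^ 2 := Real.sq_sqrt h1.le
  have hs2 : s ^ 2 = rr s ^ 2 - 1 := by have := rr_sq s; linarith
  unfold ww
  rw [mul_pow, inv_pow, h2, hs2]
  have h3 : rr s + rr s ^ 2 ≠ 0 := h1.ne'
  field_simp
  rw [div_eq_iff (mul_pos (rr_pos s) (by linarith [rr_pos s])).ne']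
  ring

lemma ww_sq_le (s : ℝ) : ww s ^ 2 < 1 := by
  have h := ww_sq s
  have hr := rr_pos s
  nlinarith

lemma X_pos (s t : ℝ) : 0 < 1 - ww s ^ 2 * Real.sin t ^ 2 := by
  have h1 : ww s ^ 2 * Real.sin t ^ 2 ≤ ww s ^ 2 := by
    nlinarith [Real.sin_sq_le_one t, sq_nonneg (ww s)]
  nlinarith [ww_sq_le s]

def G1 : ℝ × ℝ → ℝ := fun p => (rr p.1 - 1) / 2 * Real.sin (2 * p.2)
def G2 : ℝ × ℝ → ℝ := fun p =>
  -(rr p.1 * ww p.1 * (Real.cos p.2 * Real.sqrt (1 - ww p.1 ^ 2 * Real.sin p.2 ^ 2)))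
  - Real.arsinh (ww p.1 * Real.sqrt (rr p.1) * Real.cos p.2)

/-! ### Smoothness -/

lemma contDiff_rr : ContDiff ℝ (⊤:ℕ∞) rr := by
  rw [contDiff_iff_contDiffAt]
  intro s
  exact (Real.contDiffAt_sqrt (by positivity)).comp s (by fun_prop)

lemma contDiff_ww : ContDiff ℝ (⊤:ℕ∞) ww := by
  rw [contDiff_iff_contDiffAt]
  intro s
  have h1 : (0:ℝ) < rr s + rr s ^ 2 := by have := rr_pos s; nlinarith
  have h2 : ContDiffAt ℝ (⊤:ℕ∞) (fun x => Real.sqrt (rr x + rr x ^ 2)) s :=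
    (Real.contDiffAt_sqrt h1.ne').comp s
      ((contDiff_rr.contDiffAt).add ((contDiff_rr.contDiffAt).pow 2))
  exact contDiffAt_id.mul (h2.inv (Real.sqrt_ne_zero'.2 h1))

lemma contDiff_G1 : ContDiff ℝ (⊤:ℕ∞) G1 := by
  apply ContDiff.mul
  · exact ((contDiff_rr.comp contDiff_fst).sub contDiff_const).div_const 2
  · exact Real.contDiff_sin.comp (contDiff_const.mul contDiff_snd)

lemma contDiff_G2 : ContDiff ℝ (⊤:ℕ∞) G2 := by
  have hw : ContDiff ℝ (⊤:ℕ∞) (fun p : ℝ × ℝ => ww p.1) := contDiff_ww.comp contDiff_fst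
  have hr : ContDiff ℝ (⊤:ℕ∞) (fun p : ℝ × ℝ => rr p.1) := contDiff_rr.comp contDiff_fst
  have hsin : ContDiff ℝ (⊤:ℕ∞) (fun p : ℝ × ℝ => Real.sin p.2) :=
    Real.contDiff_sin.comp contDiff_snd
  have hcos : ContDiff ℝ (⊤:ℕ∞) (fun p : ℝ × ℝ => Real.cos p.2) :=
    Real.contDiff_cos.comp contDiff_snd
  have hX : ContDiff ℝ (⊤:ℕ∞) (fun p : ℝ × ℝ => 1 - ww p.1 ^ 2 * Real.sin p.2 ^ 2) :=
    contDiff_const.sub ((hw.pow 2).mul (hsin.pow 2))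
  have hsX : ContDiff ℝ (⊤:ℕ∞)
      (fun p : ℝ × ℝ => Real.sqrt (1 - ww p.1 ^ 2 * Real.sin p.2 ^ 2)) := by
    rw [contDiff_iff_contDiffAt]
    intro p
    exact (Real.contDiffAt_sqrt (X_pos p.1 p.2).ne').comp p hX.contDiffAt
  have hsr : ContDiff ℝ (⊤:ℕ∞) (fun p : ℝ × ℝ => Real.sqrt (rr p.1)) := by
    rw [contDiff_iff_contDiffAt]
    intro p
    exact (Real.contDiffAt_sqrt (rr_pos p.1).ne').comp p hr.contDiffAt
  exact (((hr.mul hw).mul (hcos.mul hsX)).neg).sub (((hw.mul hsr).mul hcos).arsinh)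

/-! ### Partial derivative operators -/

def pt (F : ℝ × ℝ → ℝ) : ℝ × ℝ → ℝ := fun p => deriv (fun t => F (p.1, t)) p.2
def ps (F : ℝ × ℝ → ℝ) : ℝ × ℝ → ℝ := fun p => deriv (fun x => F (x, p.2)) p.1

variable {F : ℝ × ℝ → ℝ}

lemma hasDerivAt_slice_t (hF : ContDiff ℝ (⊤:ℕ∞) F) (p : ℝ × ℝ) :
    HasDerivAt (fun t => F (p.1, t)) (fderiv ℝ F p ((0:ℝ), (1:ℝ))) p.2 := by
  have h1 : HasDerivAt (fun t : ℝ => (p.1, t)) ((0:ℝ), (1:ℝ)) p.2 :=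
    HasDerivAt.prodMk (hasDerivAt_const _ _) (hasDerivAt_id _)
  exact ((hF.differentiable (by simp)) p).hasFDerivAt.comp_hasDerivAt p.2 h1

lemma hasDerivAt_slice_s (hF : ContDiff ℝ (⊤:ℕ∞) F) (p : ℝ × ℝ) :
    HasDerivAt (fun x => F (x, p.2)) (fderiv ℝ F p ((1:ℝ), (0:ℝ))) p.1 := by
  have h1 : HasDerivAt (fun x : ℝ => (x, p.2)) ((1:ℝ), (0:ℝ)) p.1 :=
    HasDerivAt.prodMk (hasDerivAt_id _) (hasDerivAt_const _ _)
  exact ((hF.differentiable (by simp)) p).hasFDerivAt.comp_hasDerivAt p.1 h1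

lemma pt_eq (hF : ContDiff ℝ (⊤:ℕ∞) F) : pt F = fun p => fderiv ℝ F p ((0:ℝ), (1:ℝ)) :=
  funext fun p => (hasDerivAt_slice_t hF p).deriv

lemma ps_eq (hF : ContDiff ℝ (⊤:ℕ∞) F) : ps F = fun p => fderiv ℝ F p ((1:ℝ), (0:ℝ)) :=
  funext fun p => (hasDerivAt_slice_s hF p).deriv

lemma contDiff_pt (hF : ContDiff ℝ (⊤:ℕ∞) F) : ContDiff ℝ (⊤:ℕ∞) (pt F) := by
  rw [pt_eq hF]
  exact (hF.fderiv_right (by simp)).clm_apply contDiff_const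

lemma contDiff_ps (hF : ContDiff ℝ (⊤:ℕ∞) F) : ContDiff ℝ (⊤:ℕ∞) (ps F) := by
  rw [ps_eq hF]
  exact (hF.fderiv_right (by simp)).clm_apply contDiff_const

lemma contDiff_ptIter (hF : ContDiff ℝ (⊤:ℕ∞) F) (i : ℕ) :
    ContDiff ℝ (⊤:ℕ∞) (pt^[i] F) := by
  induction i with
  | zero => exact hF
  | succ n ih => rw [Function.iterate_succ_apply']; exact contDiff_pt ih

lemma iter_slice (F : ℝ × ℝ → ℝ) (i : ℕ) :
    ∀ s t, iteratedDeriv i (fun t' => F (s, t')) t = (pt^[i] F) (s, t) := by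
  induction i with
  | zero => intro s t; simp
  | succ n ih =>
    intro s t
    rw [iteratedDeriv_succ]
    have hfun : iteratedDeriv n (fun t' => F (s, t')) = fun t' => (pt^[n] F) (s, t') :=
      funext fun t' => ih s t'
    rw [hfun, Function.iterate_succ_apply']
    rfl

def PerT (F : ℝ × ℝ → ℝ) : Prop := ∀ s t, F (s, t + 2 * Real.pi) = F (s, t)
def EvenS (F : ℝ × ℝ → ℝ) : Prop := ∀ s t, F (-s, t) = F (s, t)

lemma perT_pt (h : PerT F) : PerT (pt F) := by
  intro s t
  show deriv (fun t' => F (s, t')) (t + 2 * Real.pi) = deriv (fun t' => F (s, t')) t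
  rw [← deriv_comp_add_const]
  congr 1
  funext x
  exact h s x

lemma perT_ps (h : PerT F) : PerT (ps F) := by
  intro s t
  show deriv (fun x => F (x, t + 2 * Real.pi)) s = deriv (fun x => F (x, t)) s
  congr 1
  funext x
  exact h x t

lemma perT_ptIter (h : PerT F) (i : ℕ) : PerT (pt^[i] F) := by
  induction i with
  | zero => exact h
  | succ n ih => rw [Function.iterate_succ_apply']; exact perT_pt ih

lemma evenS_pt (h : EvenS F) : EvenS (pt F) := by
  intro s t
  show deriv (fun t' => F (-s, t')) t = deriv (fun t' => F (s, t')) t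
  congr 1
  funext x
  exact h s x

lemma evenS_ptIter (h : EvenS F) (i : ℕ) : EvenS (pt^[i] F) := by
  induction i with
  | zero => exact h
  | succ n ih => rw [Function.iterate_succ_apply']; exact evenS_pt ih

lemma ps_zero_of_even (h : EvenS F) (t : ℝ) : ps F (0, t) = 0 := by
  have heq : (fun x => F (x, t)) = fun x => F (-x, t) := funext fun x => (h x t).symm
  show deriv (fun x => F (x, t)) 0 = 0
  have h2 : deriv (fun x => F (x, t)) 0 = -deriv (fun x => F (x, t)) 0 := by
    have h3 := deriv_comp_neg (f := fun x => F (x, t)) (x := (0:ℝ))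
    rw [neg_zero] at h3
    conv_lhs => rw [heq]
    exact h3
  linarith

lemma iteratedDeriv_zero_fun (i : ℕ) : iteratedDeriv i (fun _ : ℝ => (0:ℝ)) = fun _ => 0 := by
  induction i with
  | zero => simp
  | succ n ih => rw [iteratedDeriv_succ', deriv_const']; exact ih

lemma ptIter_zero (h0 : ∀ t, F (0, t) = 0) (i : ℕ) (t : ℝ) : (pt^[i] F) (0, t) = 0 := by
  rw [← iter_slice]
  have : (fun t' => F (0, t')) = fun _ : ℝ => (0:ℝ) := funext h0
  rw [this, iteratedDeriv_zero_fun]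

/-! ### Bound machinery -/

lemma bound_per (G : ℝ × ℝ → ℝ) (hG : Continuous G) (hper : PerT G) :
    ∃ M : ℝ, 0 < M ∧ ∀ s ∈ Icc (0:ℝ) 1, ∀ t : ℝ, |G (s, t)| ≤ M := by
  have hK : IsCompact (Icc (0:ℝ) 1 ×ˢ Icc (0:ℝ) (2 * Real.pi)) :=
    isCompact_Icc.prod isCompact_Icc
  obtain ⟨M, hM⟩ := hK.exists_bound_of_continuousOn hG.continuousOn
  have hM0 : (0:ℝ) ≤ M := by
    have h00 : ((0:ℝ), (0:ℝ)) ∈ Icc (0:ℝ) 1 ×ˢ Icc (0:ℝ) (2 * Real.pi) := by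
      constructor <;> constructor <;> positivity
    exact le_trans (norm_nonneg _) (hM _ h00)
  refine ⟨M + 1, by linarith, ?_⟩
  intro s hs t
  have hp : Function.Periodic (fun t' => G (s, t')) (2 * Real.pi) := fun x => hper s x
  obtain ⟨y, hy, hxy⟩ := hp.exists_mem_Ico₀ (by positivity) t
  have hyb : |G (s, y)| ≤ M := by
    have := hM (s, y) ⟨hs, hy.1, hy.2.le⟩
    rwa [Real.norm_eq_abs] at this
  calc |G (s, t)| = |G (s, y)| := by rw [hxy]
  _ ≤ M := hyb
  _ ≤ M + 1 := by linarith

lemma mvt {f f' : ℝ → ℝ} {M s : ℝ} (hs : 0 ≤ s)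
    (hd : ∀ x ∈ Icc (0:ℝ) s, HasDerivWithinAt f (f' x) (Icc 0 s) x)
    (hb : ∀ x ∈ Icc (0:ℝ) s, |f' x| ≤ M) (h0 : f 0 = 0) : |f s| ≤ M * s := by
  have := norm_image_sub_le_of_norm_deriv_le_segment' hd
    (fun x hx => by rw [Real.norm_eq_abs]; exact hb x (Ico_subset_Icc_self hx))
    s (right_mem_Icc.2 hs)
  rw [h0, sub_zero, sub_zero, Real.norm_eq_abs] at this
  exact this

lemma hasDerivAt_ps {H : ℝ × ℝ → ℝ} (hH : ContDiff ℝ (⊤:ℕ∞) H) (x t : ℝ) :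
    HasDerivAt (fun x' => H (x', t)) (ps H (x, t)) x := by
  have hd : DifferentiableAt ℝ (fun x' => H (x', t)) x :=
    ((hH.comp (contDiff_id.prodMk contDiff_const)).differentiable (by simp)) x
  exact hd.hasDerivAt

/-! ### Derivatives in t and the key identity -/

lemma hasDerivAt_G1_t (s t : ℝ) :
    HasDerivAt (fun t' => G1 (s, t')) ((rr s - 1) * Real.cos (2 * t)) t := by
  have h0 : HasDerivAt (fun t' : ℝ => 2 * t') 2 t := by
    simpa using (hasDerivAt_id t).const_mul 2
  have h1 : HasDerivAt (fun t' => Real.sin (2 * t')) (Real.cos (2 * t) * 2) t :=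
    (Real.hasDerivAt_sin (2 * t)).comp t h0
  have h2 := h1.const_mul ((rr s - 1) / 2)
  refine h2.congr_deriv ?_
  ring

lemma hasDerivAt_G2_t (s t : ℝ) :
    HasDerivAt (fun t' => G2 (s, t'))
      (2 * rr s * ww s * Real.sin t * Real.sqrt (1 - ww s ^ 2 * Real.sin t ^ 2)) t := by
  set r := rr s with hrdef
  set w := ww s with hwdef
  set S := Real.sin t with hSdef
  set c := Real.cos t with hcdef
  have hXpos := X_pos s t
  have hrpos := rr_pos s
  have hr1 := one_le_rr s
  have hw2 := ww_sq s
  set P := Real.sqrt (1 - w ^ 2 * S ^ 2) with hPdef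
  set U := Real.sqrt r with hUdef
  have hP0 : 0 < P := Real.sqrt_pos.2 hXpos
  have hP2 : P ^ 2 = 1 - w ^ 2 * S ^ 2 := Real.sq_sqrt hXpos.le
  have hU0 : 0 < U := Real.sqrt_pos.2 hrpos
  have hU2 : U ^ 2 = r := Real.sq_sqrt hrpos.le
  have hSc : S ^ 2 + c ^ 2 = 1 := Real.sin_sq_add_cos_sq t
  have hsq : HasDerivAt (fun t' => Real.sin t' ^ 2) ((2:ℝ) * Real.sin t ^ 1 * Real.cos t) t :=
    (Real.hasDerivAt_sin t).pow 2
  have hX : HasDerivAt (fun t' => 1 - w ^ 2 * Real.sin t' ^ 2)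
      (-(w ^ 2 * ((2:ℝ) * Real.sin t ^ 1 * Real.cos t))) t :=
    (hsq.const_mul (w ^ 2)).const_sub 1
  have hsX : HasDerivAt (fun t' => Real.sqrt (1 - w ^ 2 * Real.sin t' ^ 2))
      (-(w ^ 2 * ((2:ℝ) * Real.sin t ^ 1 * Real.cos t)) / (2 * P)) t :=
    hX.sqrt hXpos.ne'
  have hprod : HasDerivAt (fun t' => Real.cos t' * Real.sqrt (1 - w ^ 2 * Real.sin t' ^ 2))
      (-S * P + c * (-(w ^ 2 * ((2:ℝ) * Real.sin t ^ 1 * Real.cos t)) / (2 * P))) t :=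
    (Real.hasDerivAt_cos t).mul hsX
  have hterm1 := (hprod.const_mul (r * w)).neg
  have hcosk : HasDerivAt (fun t' => w * U * Real.cos t') (w * U * (-S)) t :=
    (Real.hasDerivAt_cos t).const_mul (w * U)
  have harsinh := (Real.hasDerivAt_arsinh (w * U * c)).comp t hcosk
  have htot := hterm1.sub harsinh
  have hQ : Real.sqrt (1 + (w * U * c) ^ 2) = U * P := by
    have h1 : 1 + (w * U * c) ^ 2 = (U * P) ^ 2 := by
      have h2 : (U * P) ^ 2 = U ^ 2 * P ^ 2 := by ring
      rw [h2, hU2, hP2]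
      rw [← hwdef, ← hrdef] at hw2
      linear_combination hw2 + w ^ 2 * r * hSc + w ^ 2 * c ^ 2 * hU2
    rw [h1, Real.sqrt_sq (by positivity)]
  refine htot.congr_deriv ?_
  rw [hQ]
  have hS1 : S ^ 1 = S := pow_one S
  rw [hS1]
  rw [← hwdef, ← hrdef] at hw2
  field_simp
  ring_nf
  linear_combination (w*S) * hw2 + (-(w*S*r)) * hP2 + (w*S*w^2*r) * hSc

lemma deriv_G1_t (s t : ℝ) :
    deriv (fun t' => G1 (s, t')) t = (rr s - 1) * Real.cos (2 * t) :=
  (hasDerivAt_G1_t s t).deriv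

lemma deriv_G2_t (s t : ℝ) :
    deriv (fun t' => G2 (s, t')) t
      = 2 * rr s * ww s * Real.sin t * Real.sqrt (1 - ww s ^ 2 * Real.sin t ^ 2) :=
  (hasDerivAt_G2_t s t).deriv

lemma main_id (s t : ℝ) :
    (1 + deriv (fun t' => G1 (s, t')) t) ^ 2 + (deriv (fun t' => G2 (s, t')) t) ^ 2
      = 1 + s ^ 2 := by
  rw [deriv_G1_t, deriv_G2_t]
  have hXpos := X_pos s t
  have hP2 : (Real.sqrt (1 - ww s ^ 2 * Real.sin t ^ 2)) ^ 2
      = 1 - ww s ^ 2 * Real.sin t ^ 2 := Real.sq_sqrt hXpos.le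
  have hw2 := ww_sq s
  have hr2 := rr_sq s
  have hSc : Real.sin t ^ 2 + Real.cos t ^ 2 = 1 := Real.sin_sq_add_cos_sq t
  have hcos2 : Real.cos (2 * t) = 1 - 2 * Real.sin t ^ 2 := by
    rw [Real.cos_two_mul]; linarith
  rw [hcos2]
  set r := rr s
  set w := ww s
  set S := Real.sin t
  set P := Real.sqrt (1 - w ^ 2 * S ^ 2)
  linear_combination (4*r^2*w^2*S^2) * hP2 + (4*S^2*r - 4*S^4*(r*w^2 + r - 1)) * hw2 + hr2

/-! ### Periodicity, evenness, vanishing -/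

lemma perT_G1 : PerT G1 := by
  intro s t
  show (rr s - 1) / 2 * Real.sin (2 * (t + 2 * Real.pi)) = _
  have h : 2 * (t + 2 * Real.pi) = 2 * t + 2 * Real.pi + 2 * Real.pi := by ring
  rw [h, Real.sin_add_two_pi, Real.sin_add_two_pi]
  rfl

lemma perT_G2 : PerT G2 := by
  intro s t
  show -(rr s * ww s * (Real.cos (t + 2 * Real.pi) *
        Real.sqrt (1 - ww s ^ 2 * Real.sin (t + 2 * Real.pi) ^ 2)))
      - Real.arsinh (ww s * Real.sqrt (rr s) * Real.cos (t + 2 * Real.pi)) = _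
  rw [Real.cos_add_two_pi, Real.sin_add_two_pi]
  rfl

lemma evenS_G1 : EvenS G1 := by
  intro s t
  show (rr (-s) - 1) / 2 * _ = _
  have h : rr (-s) = rr s := by unfold rr; rw [neg_pow]; ring_nf
  rw [h]
  rfl

lemma G1_zero (t : ℝ) : G1 (0, t) = 0 := by
  have h : rr 0 = 1 := by unfold rr; norm_num
  show (rr 0 - 1) / 2 * Real.sin (2 * t) = 0
  rw [h]; ring

lemma G2_zero (t : ℝ) : G2 (0, t) = 0 := by
  have hw : ww 0 = 0 := by unfold ww; ring
  show -(rr 0 * ww 0 * _) - Real.arsinh (ww 0 * _ * _) = 0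
  rw [hw]
  simp

end Stmt13

open Stmt13 in
/-- Lemma 3.4 / Kuiper corrugation profile: existence of the
corrugation function `Γ = (Γ₁, Γ₂)`. Smoothness on `[0, ε_*] × ℝ` is encoded by
requiring `Γ₁, Γ₂` to be globally smooth functions on `ℝ²` (all partial derivatives
extend continuously to the boundary). -/
theorem statement13 :
    ∃ εs : ℝ, 0 < εs ∧
    ∃ Γ₁ Γ₂ : ℝ × ℝ → ℝ,
      ContDiff ℝ (⊤ : ℕ∞) Γ₁ ∧ ContDiff ℝ (⊤ : ℕ∞) Γ₂ ∧
      (∀ s ∈ Set.Icc (0 : ℝ) εs, ∀ t : ℝ,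
        Γ₁ (s, t + 2 * Real.pi) = Γ₁ (s, t) ∧
        Γ₂ (s, t + 2 * Real.pi) = Γ₂ (s, t) ∧
        (1 + deriv (fun t' => Γ₁ (s, t')) t) ^ 2 +
          (deriv (fun t' => Γ₂ (s, t')) t) ^ 2 = 1 + s ^ 2) ∧
      (∀ i : ℕ, ∃ C : ℝ, 0 < C ∧ ∀ s ∈ Set.Icc (0 : ℝ) εs, ∀ t : ℝ,
        |iteratedDeriv i (fun t' => Γ₁ (s, t')) t| ≤ C * s ^ 2 ∧
        |iteratedDeriv i (fun t' => Γ₂ (s, t')) t| ≤ C * s ∧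
        |deriv (fun s' => iteratedDeriv i (fun t' => Γ₁ (s', t')) t) s| ≤ C * s ∧
        |deriv (fun s' => iteratedDeriv i (fun t' => Γ₂ (s', t')) t) s| ≤ C ∧
        |deriv (fun s' => deriv (fun s'' => iteratedDeriv i (fun t' => Γ₁ (s'', t')) t) s') s|
          ≤ C ∧
        |deriv (fun s' => deriv (fun s'' => iteratedDeriv i (fun t' => Γ₂ (s'', t')) t) s') s|
          ≤ C) := by
  refine ⟨1, one_pos, G1, G2, contDiff_G1, contDiff_G2, ?_, ?_⟩
  · intro s _ t
    exact ⟨perT_G1 s t, perT_G2 s t, main_id s t⟩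
  · intro i
    -- iterated t-derivatives
    set T1 := pt^[i] G1 with hT1def
    set T2 := pt^[i] G2 with hT2def
    have hT1 : ContDiff ℝ (⊤:ℕ∞) T1 := contDiff_ptIter contDiff_G1 i
    have hT2 : ContDiff ℝ (⊤:ℕ∞) T2 := contDiff_ptIter contDiff_G2 i
    have hpsT1 : ContDiff ℝ (⊤:ℕ∞) (ps T1) := contDiff_ps hT1
    have hpsT2 : ContDiff ℝ (⊤:ℕ∞) (ps T2) := contDiff_ps hT2
    have hper1 : PerT T1 := perT_ptIter perT_G1 i
    have hper2 : PerT T2 := perT_ptIter perT_G2 i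
    -- bounds on the pure second s-derivatives
    obtain ⟨M1, hM1pos, hM1⟩ := bound_per (ps (ps T1)) (contDiff_ps hpsT1).continuous
      (perT_ps (perT_ps hper1))
    obtain ⟨M2, hM2pos, hM2⟩ := bound_per (ps T2) hpsT2.continuous (perT_ps hper2)
    obtain ⟨M3, hM3pos, hM3⟩ := bound_per (ps (ps T2)) (contDiff_ps hpsT2).continuous
      (perT_ps (perT_ps hper2))
    set C := M1 + M2 + M3 with hCdef
    have hCpos : 0 < C := by positivity
    have hM1C : M1 ≤ C := by linarith
    have hM2C : M2 ≤ C := by linarith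
    have hM3C : M3 ≤ C := by linarith
    refine ⟨C, hCpos, ?_⟩
    intro s hs t
    obtain ⟨hs0, hs1⟩ := hs
    have hsub : Icc (0:ℝ) s ⊆ Icc (0:ℝ) 1 := Icc_subset_Icc le_rfl hs1
    -- vanishing facts
    have hT1zero : T1 (0, t) = 0 := ptIter_zero G1_zero i t
    have hT2zero : T2 (0, t) = 0 := ptIter_zero G2_zero i t
    have hpsT1zero : ps T1 (0, t) = 0 := ps_zero_of_even (evenS_ptIter evenS_G1 i) t
    -- first-order bound on ps T1
    have hb1 : ∀ x ∈ Icc (0:ℝ) 1, |ps T1 (x, t)| ≤ M1 * x := by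
      intro x hx
      exact mvt hx.1
        (fun y hy => (hasDerivAt_ps hpsT1 y t).hasDerivWithinAt)
        (fun y hy => hM1 y (Icc_subset_Icc le_rfl hx.2 hy) t)
        hpsT1zero
    -- second-order bound on T1
    have hb0 : |T1 (s, t)| ≤ M1 * s * s := by
      refine mvt hs0 (fun y hy => (hasDerivAt_ps hT1 y t).hasDerivWithinAt) ?_ hT1zero
      intro y hy
      calc |ps T1 (y, t)| ≤ M1 * y := hb1 y (hsub hy)
      _ ≤ M1 * s := by nlinarith [hy.2, hM1pos]
    -- first-order bound on T2
    have hb2 : |T2 (s, t)| ≤ M2 * s := by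
      refine mvt hs0 (fun y hy => (hasDerivAt_ps hT2 y t).hasDerivWithinAt) ?_ hT2zero
      intro y hy
      exact hM2 y (hsub hy) t
    -- rewrite the goal in terms of T1, T2, ps
    have e1 : ∀ s' : ℝ, iteratedDeriv i (fun t' => G1 (s', t')) t = T1 (s', t) :=
      fun s' => iter_slice G1 i s' t
    have e2 : ∀ s' : ℝ, iteratedDeriv i (fun t' => G2 (s', t')) t = T2 (s', t) :=
      fun s' => iter_slice G2 i s' t
    have f1 : (fun s' => iteratedDeriv i (fun t' => G1 (s', t')) t) = fun s' => T1 (s', t) :=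
      funext e1
    have f2 : (fun s' => iteratedDeriv i (fun t' => G2 (s', t')) t) = fun s' => T2 (s', t) :=
      funext e2
    refine ⟨?_, ?_, ?_, ?_, ?_, ?_⟩
    · rw [e1 s]
      calc |T1 (s, t)| ≤ M1 * s * s := hb0
      _ ≤ C * s ^ 2 := by nlinarith
    · rw [e2 s]
      calc |T2 (s, t)| ≤ M2 * s := hb2
      _ ≤ C * s := by nlinarith
    · rw [f1]
      show |ps T1 (s, t)| ≤ C * s
      calc |ps T1 (s, t)| ≤ M1 * s := hb1 s ⟨hs0, hs1⟩
      _ ≤ C * s := by nlinarith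
    · rw [f2]
      show |ps T2 (s, t)| ≤ C
      exact le_trans (hM2 s ⟨hs0, hs1⟩ t) hM2C
    · rw [f1]
      show |ps (ps T1) (s, t)| ≤ C
      exact le_trans (hM1 s ⟨hs0, hs1⟩ t) hM1C
    · rw [f2]
      show |ps (ps T2) (s, t)| ≤ C
      exact le_trans (hM3 s ⟨hs0, hs1⟩ t) hM3C
end
end

section
/- There exist a constant ε_* > 0 and a smooth function f : [0, ε_*] → [0, ∞) with f(0) = 0 such that for every s ∈ [0, ε_*]: (1/(2π)) ∫₀^{2π} cos(√(f(s)) · sin t) dt = (1 + s²)^{−1/2}. -/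
noncomputable section
open Real MeasureTheory Filter Nat

namespace St14

/-- Wallis-type integrals. -/
def w (k : ℕ) : ℝ := ∫ t in (0:ℝ)..(2*π), Real.sin t ^ (2*k)

/-- coefficients of `J₀(√x)`. -/
def b (k : ℕ) : ℝ := ((-1)^k / (2*k)!) * (w k / (2*π))

/-- the power series. -/
def P : FormalMultilinearSeries ℝ ℝ ℝ := FormalMultilinearSeries.ofScalars ℝ b

/-- `G x = J₀(√x)` extended analytically. -/
def G : ℝ → ℝ := P.sum

lemma w_abs_le (k : ℕ) : |w k| ≤ 2 * π := by
  have h : ‖∫ t in (0:ℝ)..(2*π), Real.sin t ^ (2*k)‖ ≤ 1 * |2*π - 0| := by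
    apply intervalIntegral.norm_integral_le_of_norm_le_const
    intro x _
    rw [Real.norm_eq_abs, abs_pow]
    exact pow_le_one₀ (abs_nonneg _) (Real.abs_sin_le_one x)
  simpa [w, abs_of_nonneg Real.two_pi_pos.le] using h

lemma b_abs_le (k : ℕ) : |b k| ≤ 1 / k ! := by
  have h1 : |w k / (2*π)| ≤ 1 := by
    rw [abs_div, abs_of_nonneg Real.two_pi_pos.le, div_le_one Real.two_pi_pos]
    exact w_abs_le k
  have h2 : |((-1:ℝ))^k / (2*k)!| ≤ 1 / k ! := by
    rw [abs_div, abs_pow, abs_neg, abs_one, one_pow]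
    have : (k ! : ℝ) ≤ (2*k)! := by
      exact_mod_cast Nat.factorial_le (by omega)
    rw [Nat.abs_cast]
    apply div_le_div_of_nonneg_left one_pos.le (by positivity) this
  calc |b k| = |((-1:ℝ))^k / (2*k)!| * |w k / (2*π)| := abs_mul _ _
  _ ≤ (1 / k !) * 1 := mul_le_mul h2 h1 (abs_nonneg _) (by positivity)
  _ = 1 / k ! := mul_one _

lemma summable_b (r : ℝ) : Summable (fun k => |b k| * |r| ^ k) := by
  refine Summable.of_nonneg_of_le (fun k => by positivity) (fun k => ?_)
    (Real.summable_pow_div_factorial |r|)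
  calc |b k| * |r| ^ k ≤ (1 / k !) * |r| ^ k :=
      mul_le_mul_of_nonneg_right (b_abs_le k) (by positivity)
  _ = |r| ^ k / k ! := by ring

lemma radius_top : P.radius = ⊤ := by
  apply FormalMultilinearSeries.radius_eq_top_of_summable_norm
  intro r
  simp only [P, FormalMultilinearSeries.ofScalars_norm, Real.norm_eq_abs]
  have h := summable_b (r : ℝ)
  rwa [abs_of_nonneg r.coe_nonneg] at h

lemma G_hasFPowerSeries : HasFPowerSeriesOnBall G P 0 ⊤ := by
  have := P.hasFPowerSeriesOnBall (by rw [radius_top]; exact ENNReal.zero_lt_top)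
  rwa [radius_top] at this

lemma G_contDiff : ContDiff ℝ (⊤ : ℕ∞) G := by
  rw [contDiff_iff_contDiffAt]
  intro x
  have : AnalyticAt ℝ G x :=
    G_hasFPowerSeries.analyticAt_of_mem (by simp)
  exact this.contDiffAt

lemma G_tsum (x : ℝ) : G x = ∑' k, b k * x ^ k := by
  have := FormalMultilinearSeries.ofScalars_sum_eq (𝕜 := ℝ) (E := ℝ) b x
  simpa [G, P, FormalMultilinearSeries.ofScalarsSum, smul_eq_mul] using this

end St14

namespace St14

lemma b_zero : b 0 = 1 := by
  have : w 0 = 2*π := by norm_num [w]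
  simp [b, this]

lemma b_one : b 1 = -(1/4) := by
  have : w 1 = π := by norm_num [w, integral_sin_sq]
  rw [b, this]
  have hπ : π ≠ 0 := ne_of_gt Real.pi_pos
  field_simp
  ring

lemma G_zero : G 0 = 1 := by
  rw [G_tsum]
  rw [tsum_eq_single 0 (fun n hn => by simp [zero_pow hn])]
  simpa using b_zero

lemma deriv_G_zero : deriv G 0 = -(1/4) := by
  have h := (G_hasFPowerSeries.hasFPowerSeriesAt).deriv
  rw [h]
  have : ((P 1) fun _ => (1:ℝ)) = b 1 := by
    rw [P, FormalMultilinearSeries.ofScalars_apply_eq]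
    simp
  rw [this, b_one]

end St14

namespace St14

lemma integral_eq (x : ℝ) (hx : 0 ≤ x) :
    (∫ t in (0:ℝ)..(2*π), Real.cos (Real.sqrt x * Real.sin t)) = 2 * π * G x := by
  set c : ℕ → ℝ := fun k => (-1)^k * x^k / (2*k)! with hc
  set F : ℕ → ℝ → ℝ := fun k t => c k * Real.sin t ^ (2*k) with hF
  have hcos : ∀ t : ℝ, Real.cos (Real.sqrt x * Real.sin t) = ∑' k, F k t := by
    intro t
    rw [Real.cos_eq_tsum]
    refine tsum_congr fun k => ?_
    rw [hF, hc]
    simp only [mul_pow, pow_mul, Real.sq_sqrt hx]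
    ring
  have h0 : (0:ℝ) ≤ 2*π := Real.two_pi_pos.le
  rw [intervalIntegral.integral_of_le h0]
  simp only [hcos]
  have hFint : ∀ k, Integrable (F k) (volume.restrict (Set.Ioc (0:ℝ) (2*π))) := by
    intro k
    exact (continuous_const.mul (Real.continuous_sin.pow _)).integrableOn_Ioc
  have key : ∫ t in Set.Ioc (0:ℝ) (2*π), (∑' k, F k t) =
      ∑' k, ∫ t in Set.Ioc (0:ℝ) (2*π), F k t := by
    refine (MeasureTheory.integral_tsum_of_summable_integral_norm hFint ?_).symm
    refine Summable.of_nonneg_of_le (fun k => integral_nonneg fun t => norm_nonneg _)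
      (fun k => ?_) ((Real.summable_pow_div_factorial x).mul_right (2*π))
    have hb : ∀ t, ‖F k t‖ ≤ |c k| := by
      intro t
      rw [hF, norm_mul, Real.norm_eq_abs, Real.norm_eq_abs, abs_pow]
      calc |c k| * |Real.sin t| ^ (2*k) ≤ |c k| * 1 := by
            apply mul_le_mul_of_nonneg_left _ (abs_nonneg _)
            exact pow_le_one₀ (abs_nonneg _) (Real.abs_sin_le_one t)
      _ = |c k| := mul_one _
    calc (∫ t in Set.Ioc (0:ℝ) (2*π), ‖F k t‖)
        ≤ ∫ _t in Set.Ioc (0:ℝ) (2*π), |c k| := by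
          apply integral_mono (hFint k).norm (integrable_const _)
          intro t; exact hb t
      _ = |c k| * (2*π) := by
          rw [integral_const]
          simp [Real.volume_Ioc, ENNReal.toReal_ofReal h0, smul_eq_mul]
          rw [max_eq_left h0]
          ring
      _ ≤ x ^ k / k ! * (2*π) := by
          apply mul_le_mul_of_nonneg_right _ h0
          rw [hc, abs_div, abs_mul, abs_pow, abs_pow, abs_neg, abs_one, one_pow,
            one_mul, abs_of_nonneg hx, Nat.abs_cast]
          have : (k ! : ℝ) ≤ (2*k)! := by exact_mod_cast Nat.factorial_le (by omega)
          apply div_le_div_of_nonneg_left _ (by positivity) this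
          positivity
  rw [key]
  have hterm : ∀ k, (∫ t in Set.Ioc (0:ℝ) (2*π), F k t) = 2*π * (b k * x^k) := by
    intro k
    rw [hF]
    simp only
    rw [MeasureTheory.integral_const_mul]
    have hw : (∫ t in Set.Ioc (0:ℝ) (2*π), Real.sin t ^ (2*k)) = w k := by
      rw [w, intervalIntegral.integral_of_le h0]
    rw [hw, hc, b]
    have hπ : π ≠ 0 := ne_of_gt Real.pi_pos
    field_simp
  simp only [hterm]
  rw [tsum_mul_left, G_tsum]

end St14

namespace St14

lemma exists_inverse : ∃ U : Set ℝ, IsOpen U ∧ (1:ℝ) ∈ U ∧ ∃ gg : ℝ → ℝ,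
    ContDiffOn ℝ (⊤:ℕ∞) gg U ∧ gg 1 = 0 ∧
    ∀ y ∈ U, G (gg y) = y ∧ (y ≤ 1 → 0 ≤ gg y) := by
  -- a ball where `deriv G < 0`
  have hcd : Continuous (deriv G) := G_contDiff.continuous_deriv (by exact_mod_cast le_top)
  have hopen : IsOpen {x : ℝ | deriv G x < 0} := isOpen_lt hcd continuous_const
  have h0mem : (0:ℝ) ∈ {x : ℝ | deriv G x < 0} := by
    simp [deriv_G_zero]
  obtain ⟨δ, hδpos, hδ⟩ := Metric.isOpen_iff.mp hopen 0 h0mem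
  have hneg : ∀ x ∈ Metric.ball (0:ℝ) δ, deriv G x < 0 := fun x hx => hδ hx
  have hanti : StrictAntiOn G (Metric.ball (0:ℝ) δ) := by
    apply strictAntiOn_of_deriv_neg (convex_ball 0 δ) G_contDiff.continuous.continuousOn
    rwa [interior_eq_iff_isOpen.mpr Metric.isOpen_ball]
  -- the partial homeomorph at 0
  have hsd0 : HasStrictDerivAt G (-(1/4)) 0 := by
    have := (G_contDiff.contDiffAt (x := 0)).hasStrictDerivAt (by simp)
    rwa [deriv_G_zero] at this
  have hne0 : (-(1/4) : ℝ) ≠ 0 := by norm_num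
  set ps : HasStrictFDerivAt G _ 0 := hsd0.hasStrictFDerivAt_equiv hne0 with hps
  set ph := ps.toOpenPartialHomeomorph G with hph
  have hcoe : (ph : ℝ → ℝ) = G := ps.toOpenPartialHomeomorph_coe
  have h0src : (0:ℝ) ∈ ph.source := ps.mem_toOpenPartialHomeomorph_source
  have h1tgt : (1:ℝ) ∈ ph.target := by
    have := ps.image_mem_toOpenPartialHomeomorph_target
    rwa [G_zero] at this
  set gg : ℝ → ℝ := ⇑ph.symm with hgg
  have hgg1 : gg 1 = 0 := by
    have := ph.left_inv h0src
    rw [hgg, ← G_zero]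
    rw [show ph 0 = G 0 from congrFun hcoe 0] at this
    exact this
  have hright : ∀ z ∈ ph.target, G (gg z) = z := by
    intro z hz
    have := ph.right_inv hz
    rwa [show ph (gg z) = G (gg z) from congrFun hcoe _] at this
  -- the open set U
  set U := ph.target ∩ gg ⁻¹' (Metric.ball (0:ℝ) δ) with hU
  have hggcont : ContinuousOn gg ph.target := ph.continuousOn_symm
  have hUopen : IsOpen U :=
    hggcont.isOpen_inter_preimage ph.open_target Metric.isOpen_ball
  have h1U : (1:ℝ) ∈ U := by
    constructor
    · exact h1tgt
    · simp [hgg1, Metric.mem_ball, hδpos]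
  refine ⟨U, hUopen, h1U, gg, ?_, hgg1, ?_⟩
  · -- smoothness
    intro y hy
    apply ContDiffAt.contDiffWithinAt
    obtain ⟨hyt, hyb⟩ := hy
    set a := gg y with ha
    have hGa : G a = y := hright y hyt
    have hane : deriv G a ≠ 0 := (hneg a hyb).ne
    have hd : HasDerivAt G (deriv G a) a :=
      ((G_contDiff.differentiable (by simp)) a).hasDerivAt
    have hf' := hd.hasFDerivAt_equiv hane
    have hca : ContDiffAt ℝ (⊤:ℕ∞) G a := G_contDiff.contDiffAt
    have hn : ((⊤:ℕ∞) : WithTop ℕ∞) ≠ 0 := by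
      simp
    set ψ := hca.localInverse hf' hn with hψdef
    have hψsmooth : ContDiffAt ℝ (⊤:ℕ∞) ψ y := by
      have := hca.to_localInverse (hf' := hf') (hn := hn)
      rwa [hGa] at this
    have hψa : ψ (G a) = a := hca.localInverse_apply_image hf' hn
    -- eventual equality of gg and ψ near y
    have hstrict := hca.hasStrictFDerivAt' hf' hn
    have hev1 : ∀ᶠ z in nhds y, G (ψ z) = z := by
      have := hstrict.eventually_right_inverse
      rwa [hGa] at this
    have hev2 : ∀ᶠ z in nhds y, ψ z ∈ Metric.ball (0:ℝ) δ := by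
      have hcont : ContinuousAt ψ y := hψsmooth.continuousAt
      have : ψ y ∈ Metric.ball (0:ℝ) δ := by rw [← hGa, hψa]; exact hyb
      exact hcont.eventually_mem (Metric.isOpen_ball.mem_nhds this)
    have hev3 : ∀ᶠ z in nhds y, z ∈ ph.target := ph.open_target.mem_nhds hyt
    have hev4 : ∀ᶠ z in nhds y, gg z ∈ Metric.ball (0:ℝ) δ := by
      have hcont : ContinuousAt gg y := ph.continuousAt_symm hyt
      exact hcont.eventually_mem (Metric.isOpen_ball.mem_nhds hyb)
    have heq : gg =ᶠ[nhds y] ψ := by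
      filter_upwards [hev1, hev2, hev3, hev4] with z h1 h2 h3 h4
      exact hanti.injOn h4 h2 (by rw [hright z h3, h1])
    exact hψsmooth.congr_of_eventuallyEq heq
  · -- inverse property and nonnegativity
    intro y hy
    obtain ⟨hyt, hyb⟩ := hy
    refine ⟨hright y hyt, fun hy1 => ?_⟩
    by_contra hneg'
    push_neg at hneg'
    have h0b : (0:ℝ) ∈ Metric.ball (0:ℝ) δ := Metric.mem_ball_self hδpos
    have := hanti hyb h0b hneg'
    rw [hright y hyt, G_zero] at this
    linarith

end St14

namespace St14

def r (s : ℝ) : ℝ := (Real.sqrt (1 + s^2))⁻¹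

lemma r_contDiff : ContDiff ℝ (⊤:ℕ∞) r := by
  rw [contDiff_iff_contDiffAt]
  intro s
  have h1 : (0:ℝ) < 1 + s^2 := by positivity
  have hin : ContDiffAt ℝ (⊤:ℕ∞) (fun s : ℝ => 1 + s^2) s := by fun_prop
  have hsq : ContDiffAt ℝ (⊤:ℕ∞) (fun s : ℝ => Real.sqrt (1 + s^2)) s :=
    (Real.contDiffAt_sqrt h1.ne').comp s hin
  exact hsq.inv (Real.sqrt_pos.mpr h1).ne'

lemma r_zero : r 0 = 1 := by norm_num [r]

lemma r_le_one (s : ℝ) : r s ≤ 1 := by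
  rw [r]
  have h1 : (1:ℝ) ≤ Real.sqrt (1 + s^2) := by
    have := Real.sqrt_le_sqrt (show (1:ℝ) ≤ 1 + s^2 by nlinarith [sq_nonneg s])
    simpa using this
  exact inv_le_one_of_one_le₀ h1

theorem statement14' :
    ∃ εs : ℝ, 0 < εs ∧
    ∃ f : ℝ → ℝ, ContDiff ℝ (⊤ : ℕ∞) f ∧ f 0 = 0 ∧
      ∀ s ∈ Set.Icc (0 : ℝ) εs, 0 ≤ f s ∧
        (1 / (2 * Real.pi)) *
            (∫ t in (0 : ℝ)..(2 * Real.pi), Real.cos (Real.sqrt (f s) * Real.sin t))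
          = (Real.sqrt (1 + s ^ 2))⁻¹ := by
  obtain ⟨U, hUopen, h1U, g, hgsmooth, hg1, hgprop⟩ := exists_inverse
  have hWopen : IsOpen (r ⁻¹' U) := hUopen.preimage r_contDiff.continuous
  have h0W : (0:ℝ) ∈ r ⁻¹' U := by
    simp only [Set.mem_preimage, r_zero]; exact h1U
  obtain ⟨ρ, hρpos, hρ⟩ := Metric.isOpen_iff.mp hWopen 0 h0W
  set χ : ContDiffBump (0:ℝ) := ⟨ρ/2, 3*ρ/4, by positivity, by linarith⟩ with hχ
  set f : ℝ → ℝ := fun s => χ s * g (r s) with hf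
  have hπ : π ≠ 0 := Real.pi_pos.ne'
  have hfsmooth : ContDiff ℝ (⊤ : ℕ∞) f := by
    rw [contDiff_iff_contDiffAt]
    intro s
    by_cases hs : s ∈ Metric.ball (0:ℝ) ρ
    · have hrU : r s ∈ U := hρ hs
      have h1 : ContDiffAt ℝ (⊤:ℕ∞) (⇑χ) s := χ.contDiff.contDiffAt
      have h2 : ContDiffAt ℝ (⊤:ℕ∞) (fun s => g (r s)) s :=
        (hgsmooth.contDiffAt (hUopen.mem_nhds hrU)).comp s r_contDiff.contDiffAt
      exact h1.mul h2
    · have hext : ∀ᶠ z in nhds s, f z = 0 := by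
        have hopen : IsOpen (Metric.closedBall (0:ℝ) (3*ρ/4))ᶜ :=
          Metric.isClosed_closedBall.isOpen_compl
        have hsmem : s ∈ (Metric.closedBall (0:ℝ) (3*ρ/4))ᶜ := by
          simp only [Metric.mem_ball, not_lt] at hs
          simp only [Set.mem_compl_iff, Metric.mem_closedBall, not_le]
          calc 3*ρ/4 < ρ := by linarith
          _ ≤ dist s 0 := hs
        filter_upwards [hopen.mem_nhds hsmem] with z hz
        have : χ z = 0 := by
          apply χ.zero_of_le_dist
          simp only [Set.mem_compl_iff, Metric.mem_closedBall, not_le] at hz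
          exact le_of_lt hz
        simp [hf, this]
      exact contDiffAt_const.congr_of_eventuallyEq hext
  have hf0 : f 0 = 0 := by
    have : χ 0 = 1 := χ.one_of_mem_closedBall (Metric.mem_closedBall_self χ.rIn_pos.le)
    simp [hf, this, r_zero, hg1]
  refine ⟨ρ/2, by positivity, f, hfsmooth, hf0, ?_⟩
  intro s hs
  obtain ⟨hs0, hs1⟩ := hs
  have hsb : s ∈ Metric.ball (0:ℝ) ρ := by
    simp only [Metric.mem_ball, Real.dist_eq, sub_zero]
    rw [abs_of_nonneg hs0]; linarith
  have hrU : r s ∈ U := hρ hsb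
  have hχ1 : χ s = 1 := by
    apply χ.one_of_mem_closedBall
    simp only [Metric.mem_closedBall, Real.dist_eq, sub_zero]
    rw [abs_of_nonneg hs0]; exact hs1
  have hfs : f s = g (r s) := by simp [hf, hχ1]
  obtain ⟨hGinv, hnn⟩ := hgprop (r s) hrU
  have hfnn : 0 ≤ f s := by rw [hfs]; exact hnn (r_le_one s)
  refine ⟨hfnn, ?_⟩
  have hint := integral_eq (f s) hfnn
  rw [hint, hfs, hGinv]
  rw [show r s = (Real.sqrt (1 + s^2))⁻¹ from rfl]
  field_simp

end St14

noncomputable section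

/-- Remark 3.5: the implicit function `f` solving
`⨍₀^{2π} cos(√(f(s)) sin t) dt = (1+s²)^{−1/2}` with `f(0) = 0`. Smoothness on
`[0, ε_*]` is encoded by requiring `f` to be a globally smooth function on `ℝ`
(all derivatives extend continuously to the endpoints). -/
theorem statement14 :
    ∃ εs : ℝ, 0 < εs ∧
    ∃ f : ℝ → ℝ, ContDiff ℝ (⊤ : ℕ∞) f ∧ f 0 = 0 ∧
      ∀ s ∈ Set.Icc (0 : ℝ) εs, 0 ≤ f s ∧
        (1 / (2 * Real.pi)) *
            (∫ t in (0 : ℝ)..(2 * Real.pi), Real.cos (Real.sqrt (f s) * Real.sin t))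
          = (Real.sqrt (1 + s ^ 2))⁻¹ :=
  St14.statement14'
end
end
end

section
/- Let n ≥ 2, let Ω ⊂ ℝⁿ be a bounded domain, and let H ∈ C^∞(Ω̄, Sym_n) be uniformly positive definite, i.e. H(x) ≥ c·Id for all x ∈ Ω̄ and some constant c > 0. Then there exist an integer N_* ≥ n(n+1)/2, unit vectors ν₁, …, ν_{N_*} ∈ 𝕊^{n−1}, and strictly positive functions ā₁, …, ā_{N_*} ∈ C^∞(Ω̄, ℝ) such that H(x) = Σ_{i=1}^{N_*} ā_i(x)² ν_i ⊗ ν_i for all x ∈ Ω̄. -/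
attribute [local instance] Matrix.normedAddCommGroup Matrix.normedSpace

noncomputable section

namespace St17

open Matrix


def sgn {n : ℕ} (i j : Fin n) : ℝ := if i < j then 1 else -1

lemma sgn_sq {n : ℕ} (i j : Fin n) : sgn i j * sgn i j = 1 := by
  unfold sgn; split <;> norm_num

lemma sgn_ii {n : ℕ} (i : Fin n) : sgn i i = -1 := by unfold sgn; simp

lemma sgn_add_sgn {n : ℕ} (i j : Fin n) :
    sgn i j + sgn j i = if i = j then -2 else 0 := by
  unfold sgn
  rcases lt_trichotomy i j with h | h | h
  · simp [h, not_lt.2 h.le, h.ne]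
  · subst h; norm_num
  · simp [h, not_lt.2 h.le, h.ne']

lemma sum_sgn_mul {n : ℕ} (h : Fin n → Fin n → ℝ) (hsym : ∀ i j, h i j = h j i) :
    ∑ i, ∑ j, sgn i j * h i j = -∑ i, h i i := by
  have h1 : ∑ i, ∑ j, sgn i j * h i j = ∑ i, ∑ j, sgn j i * h i j := by
    rw [Finset.sum_comm]
    exact Finset.sum_congr rfl fun i _ => Finset.sum_congr rfl fun j _ => by rw [hsym]
  have h2 : ∀ i : Fin n, ((∑ j, sgn i j * h i j) + ∑ j, sgn j i * h i j)
      = ∑ j, (sgn i j + sgn j i) * h i j := by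
    intro i
    rw [← Finset.sum_add_distrib]
    exact Finset.sum_congr rfl fun j _ => by ring
  have h3 : ∀ i : Fin n, ∑ j, (sgn i j + sgn j i) * h i j = -2 * h i i := by
    intro i
    rw [Finset.sum_eq_single i]
    · rw [sgn_add_sgn]; simp
    · intro j _ hj
      rw [sgn_add_sgn, if_neg (fun h => hj h.symm), zero_mul]
    · simp
  have key : (∑ i, ∑ j, sgn i j * h i j) + ∑ i, ∑ j, sgn i j * h i j
      = ∑ i, (-2 : ℝ) * h i i := by
    nth_rewrite 2 [h1]
    rw [← Finset.sum_add_distrib]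
    exact Finset.sum_congr rfl fun i _ => (h2 i).trans (h3 i)
  have h4 : ∑ i, (-2:ℝ) * h i i = -2 * ∑ i, h i i := by rw [Finset.mul_sum]
  rw [h4] at key
  linarith

/-- the scalar core identity -/
lemma core {n : ℕ} (M : Matrix (Fin n) (Fin n) ℝ) (hM : ∀ i j, M i j = M j i)
    (ε : ℝ) (a b : Fin n → ℝ) :
    ∑ i, ∑ j, (if i = j then (M i i - ((n:ℝ) - 1) * ε) * (a i * b i)
      else ((ε + sgn i j * M i j) / 2) * ((a i + sgn i j * a j) * (b i + sgn i j * b j)))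
    = ∑ i, ∑ j, M i j * (a i * b j) := by
  set A : Fin n → Fin n → ℝ := fun i j =>
    ε / 2 * (a i * b i) + ε / 2 * (a j * b j) + 1 / 2 * (M i j * (a i * b j))
      + 1 / 2 * (M i j * (a j * b i)) with hA
  set B : Fin n → Fin n → ℝ := fun i j =>
    ε * (a i * b j + a j * b i) / 2 + M i j * (a i * b i + a j * b j) / 2 with hB
  have hexp : ∀ (t m ai aj bi bj : ℝ), t * t = 1 →
      ((ε + t * m) / 2) * ((ai + t * aj) * (bi + t * bj))
      = (ε / 2 * (ai * bi) + ε / 2 * (aj * bj) + 1 / 2 * (m * (ai * bj))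
          + 1 / 2 * (m * (aj * bi)))
        + t * (ε * (ai * bj + aj * bi) / 2 + m * (ai * bi + aj * bj) / 2) := by
    intro t m ai aj bi bj h
    linear_combination (ε / 2 * (aj * bj) + m / 2 * (ai * bj + aj * bi) + t * m / 2 * (aj * bj)) * h
  have step1 : ∀ i j, (if i = j then (M i i - ((n:ℝ) - 1) * ε) * (a i * b i)
      else ((ε + sgn i j * M i j) / 2) * ((a i + sgn i j * a j) * (b i + sgn i j * b j)))
      = (if i = j then ((M i i - ((n:ℝ) - 1) * ε) * (a i * b i) - (A i i + sgn i i * B i i)) else 0)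
        + (A i j + sgn i j * B i j) := by
    intro i j
    by_cases h : i = j
    · subst h; simp
    · rw [if_neg h, if_neg h, hexp _ _ _ _ _ _ (sgn_sq i j), zero_add]
  have hBsym : ∀ i j, B i j = B j i := by
    intro i j; simp only [hB]; rw [hM i j]; ring
  have swap : ∑ i, ∑ j, M i j * (a j * b i) = ∑ i, ∑ j, M i j * (a i * b j) := by
    rw [Finset.sum_comm]
    exact Finset.sum_congr rfl fun i _ => Finset.sum_congr rfl fun j _ => by rw [hM]
  calc
    _ = ∑ i, ∑ j, ((if i = j then ((M i i - ((n:ℝ) - 1) * ε) * (a i * b i)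
          - (A i i + sgn i i * B i i)) else 0) + (A i j + sgn i j * B i j)) := by
        exact Finset.sum_congr rfl fun i _ => Finset.sum_congr rfl fun j _ => step1 i j
    _ = (∑ i, ((M i i - ((n:ℝ) - 1) * ε) * (a i * b i) - (A i i + sgn i i * B i i)))
        + ((∑ i, ∑ j, A i j) + ∑ i, ∑ j, sgn i j * B i j) := by
        simp_rw [Finset.sum_add_distrib]
        congr 1
        exact Finset.sum_congr rfl fun i _ => by
          rw [Finset.sum_ite_eq Finset.univ i (fun _ => (M i i - ((n:ℝ) - 1) * ε) * (a i * b i)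
            - (A i i + sgn i i * B i i))]; simp
    _ = ∑ i, ∑ j, M i j * (a i * b j) := ?_
  rw [sum_sgn_mul B hBsym]
  have hAsum : ∑ i, ∑ j, A i j
      = (n:ℝ) * ε * (∑ i, a i * b i) + ∑ i, ∑ j, M i j * (a i * b j) := by
    simp only [hA]
    simp_rw [Finset.sum_add_distrib]
    have c1 : ∑ _i : Fin n, ∑ _j : Fin n, (ε / 2) * 1 = (n:ℝ) * (n:ℝ) * (ε/2) := by
      simp [Finset.sum_const, Finset.card_univ]; ring
    have e1 : ∑ i : Fin n, ∑ _j : Fin n, ε / 2 * (a i * b i)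
        = (n:ℝ) * (ε / 2) * ∑ i, a i * b i := by
      simp [Finset.sum_const, Finset.card_univ, Finset.mul_sum]
      exact Finset.sum_congr rfl fun i _ => by ring
    have e2 : ∑ i : Fin n, ∑ j : Fin n, ε / 2 * (a j * b j)
        = (n:ℝ) * (ε / 2) * ∑ i, a i * b i := by
      rw [Finset.sum_comm]; exact e1
    have e3 : ∑ i, ∑ j, 1 / 2 * (M i j * (a i * b j))
        = (∑ i, ∑ j, M i j * (a i * b j)) / 2 := by
      rw [Finset.sum_div]
      exact Finset.sum_congr rfl fun i _ => by
        rw [Finset.sum_div]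
        exact Finset.sum_congr rfl fun j _ => by ring
    have e4 : ∑ i, ∑ j, 1 / 2 * (M i j * (a j * b i))
        = (∑ i, ∑ j, M i j * (a i * b j)) / 2 := by
      rw [← swap, Finset.sum_div]
      exact Finset.sum_congr rfl fun i _ => by
        rw [Finset.sum_div]
        exact Finset.sum_congr rfl fun j _ => by ring
    rw [e1, e2, e3, e4]
    ring
  have hdiag : ∑ i, ((M i i - ((n:ℝ) - 1) * ε) * (a i * b i) - (A i i + sgn i i * B i i))
      = - ((n:ℝ) * ε * ∑ i, a i * b i) + ∑ i, B i i := by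
    have : ∀ i : Fin n, (M i i - ((n:ℝ) - 1) * ε) * (a i * b i) - (A i i + sgn i i * B i i)
        = - (n:ℝ) * ε * (a i * b i) + B i i := by
      intro i
      simp only [hA, hB, sgn_ii]
      ring
    rw [Finset.sum_congr rfl fun i _ => this i, Finset.sum_add_distrib, ← Finset.mul_sum]
    ring
  rw [hAsum, hdiag]
  ring



lemma triple_apply {n : ℕ} (X D Y : Matrix (Fin n) (Fin n) ℝ) (i j : Fin n) :
    (X * D * Y) i j = ∑ k, ∑ l, D k l * (X i k * Y l j) := by
  rw [Matrix.mul_apply]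
  rw [Finset.sum_comm]
  refine Finset.sum_congr rfl fun k _ => ?_
  rw [Matrix.mul_apply, Finset.sum_mul]
  exact Finset.sum_congr rfl fun l _ => by ring

lemma entry_contDiff {n : ℕ} (k l : Fin n) :
    ContDiff ℝ (⊤ : ℕ∞) (fun B : Matrix (Fin n) (Fin n) ℝ => B k l) := by
  have h1 : ContDiff ℝ (⊤ : ℕ∞) (id : Matrix (Fin n) (Fin n) ℝ → Matrix (Fin n) (Fin n) ℝ) :=
    contDiff_id
  have h2 := (contDiff_pi.mp h1) k
  exact (contDiff_pi.mp h2) l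

lemma triple_entry_contDiff {n : ℕ} (X Y : Matrix (Fin n) (Fin n) ℝ) (i j : Fin n) :
    ContDiff ℝ (⊤ : ℕ∞) (fun B : Matrix (Fin n) (Fin n) ℝ => (X * B * Y) i j) := by
  have : (fun B : Matrix (Fin n) (Fin n) ℝ => (X * B * Y) i j)
      = fun B => ∑ k, ∑ l, B k l * (X i k * Y l j) := by
    funext B; exact triple_apply X B Y i j
  rw [this]
  exact ContDiff.sum fun k _ => ContDiff.sum fun l _ => (entry_contDiff k l).mul contDiff_const

lemma triple_entry_bound {n : ℕ} (X D Y : Matrix (Fin n) (Fin n) ℝ) (i j : Fin n) :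
    |(X * D * Y) i j| ≤ (n:ℝ)^2 * (‖X‖ * ‖D‖ * ‖Y‖) := by
  rw [triple_apply]
  calc |∑ k, ∑ l, D k l * (X i k * Y l j)|
      ≤ ∑ k, |∑ l, D k l * (X i k * Y l j)| := Finset.abs_sum_le_sum_abs _ _
    _ ≤ ∑ k : Fin n, ∑ l : Fin n, |D k l * (X i k * Y l j)| :=
        Finset.sum_le_sum fun k _ => Finset.abs_sum_le_sum_abs _ _
    _ ≤ ∑ k : Fin n, ∑ l : Fin n, ‖X‖ * ‖D‖ * ‖Y‖ := by
        refine Finset.sum_le_sum fun k _ => Finset.sum_le_sum fun l _ => ?_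
        rw [abs_mul, abs_mul]
        have h1 : |D k l| ≤ ‖D‖ := D.norm_entry_le_entrywise_sup_norm
        have h2 : |X i k| ≤ ‖X‖ := X.norm_entry_le_entrywise_sup_norm
        have h3 : |Y l j| ≤ ‖Y‖ := Y.norm_entry_le_entrywise_sup_norm
        have := mul_le_mul (mul_le_mul h1 h2 (abs_nonneg _) (norm_nonneg _)) h3
          (abs_nonneg _) (mul_nonneg (norm_nonneg _) (norm_nonneg _))
        calc |D k l| * (|X i k| * |Y l j|) = |D k l| * |X i k| * |Y l j| := by ring
          _ ≤ ‖D‖ * ‖X‖ * ‖Y‖ := this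
          _ = ‖X‖ * ‖D‖ * ‖Y‖ := by ring
    _ = (n:ℝ)^2 * (‖X‖ * ‖D‖ * ‖Y‖) := by
        simp [Finset.sum_const, Finset.card_univ]; ring





section degenerate
variable {n : ℕ}

open scoped MatrixOrder in
lemma local_decomp (n : ℕ) (hn : 0 < n) (A0 : Matrix (Fin n) (Fin n) ℝ)
    (hA0 : A0.PosDef) :
    ∃ (u : Fin n × Fin n → (Fin n → ℝ)) (δ : ℝ)
      (α : (Fin n × Fin n) → Matrix (Fin n) (Fin n) ℝ → ℝ),
      0 < δ ∧ (∀ p, ∑ i, (u p i)^2 = 1) ∧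
      (∀ p, ContDiff ℝ (⊤:ℕ∞) (α p)) ∧
      (∀ p B, ‖B - A0‖ < δ → 0 < α p B) ∧
      (∀ B : Matrix (Fin n) (Fin n) ℝ, Bᵀ = B →
        ∑ p : Fin n × Fin n, (α p B) • Matrix.vecMulVec (u p) (u p) = B) := by
  classical
  set R := CFC.sqrt A0 with hRdef
  have hRR : R * R = A0 := CFC.sqrt_mul_sqrt_self A0 hA0.posSemidef.nonneg
  have hRsym : Rᵀ = R := by
    have := (CFC.sqrt_nonneg A0).posSemidef.isHermitian
    rwa [Matrix.IsHermitian, Matrix.conjTranspose_eq_transpose_of_trivial] at this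
  have hRdet : IsUnit R.det := by
    have hd : R.det * R.det = A0.det := by rw [← Matrix.det_mul, hRR]
    have : A0.det ≠ 0 := hA0.det_pos.ne'
    have : R.det ≠ 0 := fun h => this (by rw [← hd, h, mul_zero])
    exact this.isUnit
  set Q := R⁻¹ with hQdef
  have hQR : Q * R = 1 := Matrix.nonsing_inv_mul R hRdet
  have hRQ : R * Q = 1 := Matrix.mul_nonsing_inv R hRdet
  have hQsym : Qᵀ = Q := by rw [hQdef, Matrix.transpose_nonsing_inv, hRsym]
  -- vectors
  set w : Fin n × Fin n → (Fin n → ℝ) := fun p =>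
    if p.1 = p.2 then (fun k => R k p.1)
    else (fun k => R k p.1 + sgn p.1 p.2 * R k p.2) with hw
  have hwv : ∀ p : Fin n × Fin n, w p ≠ 0 := by
    intro p hzero
    set v : Fin n → ℝ := if p.1 = p.2 then Pi.single p.1 1
      else Pi.single p.1 1 + sgn p.1 p.2 • (Pi.single p.2 1 : Fin n → ℝ) with hv
    have hRv : R *ᵥ v = w p := by
      funext k
      by_cases h : p.1 = p.2
      · simp [hv, hw, h, Matrix.mulVec_single]
      · simp [hv, hw, h, Matrix.mulVec_add, Matrix.mulVec_smul, Matrix.mulVec_single]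
    have hv1 : v p.1 = 1 := by
      by_cases h : p.1 = p.2
      · simp [hv, h]
      · simp [hv, h, Pi.single_eq_of_ne (Ne.symm h)]
    have : v = 0 := by
      have : v = (Q * R) *ᵥ v := by rw [hQR, Matrix.one_mulVec]
      rw [← Matrix.mulVec_mulVec, hRv, hzero] at this
      simpa [Matrix.mulVec_zero] using this
    rw [this] at hv1
    simp at hv1
  have hnp : ∀ p : Fin n × Fin n, 0 < ∑ i, (w p i)^2 := by
    intro p
    obtain ⟨i, hi⟩ : ∃ i, w p i ≠ 0 := by
      by_contra h
      push_neg at h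
      exact hwv p (funext h)
    exact Finset.sum_pos' (fun i _ => sq_nonneg _) ⟨i, Finset.mem_univ i, by positivity⟩
  set np : Fin n × Fin n → ℝ := fun p => ∑ i, (w p i)^2 with hnpdef
  set u : Fin n × Fin n → (Fin n → ℝ) := fun p => (Real.sqrt (np p))⁻¹ • w p with hu
  have hunit : ∀ p, ∑ i, (u p i)^2 = 1 := by
    intro p
    simp only [hu, Pi.smul_apply, smul_eq_mul]
    have : ∀ i, ((Real.sqrt (np p))⁻¹ * w p i)^2 = (np p)⁻¹ * (w p i)^2 := by
      intro i
      rw [mul_pow, inv_pow, Real.sq_sqrt (hnp p).le]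
    rw [Finset.sum_congr rfl fun i _ => this i, ← Finset.mul_sum]
    exact inv_mul_cancel₀ (hnp p).ne'
  -- coefficients
  set ε : ℝ := 1 / (2 * n) with hε
  set γ : (Fin n × Fin n) → Matrix (Fin n) (Fin n) ℝ → ℝ := fun p B =>
    if p.1 = p.2 then (Q * B * Q) p.1 p.1 - ((n:ℝ) - 1) * ε
    else (ε + sgn p.1 p.2 * (Q * B * Q) p.1 p.2) / 2 with hγ
  set α : (Fin n × Fin n) → Matrix (Fin n) (Fin n) ℝ → ℝ := fun p B => np p * γ p B with hα
  set θ : ℝ := 1 / (4 * n) with hθ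
  set δ : ℝ := θ / ((n:ℝ)^2 * (‖Q‖ + 1)^2) with hδ
  have hn' : (0:ℝ) < n := by exact_mod_cast hn
  have hθpos : 0 < θ := by rw [hθ]; positivity
  have hδpos : 0 < δ := by rw [hδ]; positivity
  refine ⟨u, δ, α, hδpos, hunit, ?_, ?_, ?_⟩
  · -- smoothness
    intro p
    by_cases h : p.1 = p.2
    · have : α p = fun B => np p * ((Q * B * Q) p.1 p.1 - ((n:ℝ) - 1) * ε) := by
        funext B; simp only [hα, hγ, if_pos h]
      rw [this]
      exact contDiff_const.mul ((triple_entry_contDiff Q Q p.1 p.1).sub contDiff_const)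
    · have : α p = fun B => np p * ((ε + sgn p.1 p.2 * (Q * B * Q) p.1 p.2) / 2) := by
        funext B; simp only [hα, hγ, if_neg h]
      rw [this]
      exact contDiff_const.mul (((contDiff_const.add
        (contDiff_const.mul (triple_entry_contDiff Q Q p.1 p.2))).div_const 2))
  · -- positivity
    intro p B hB
    have hQA : Q * A0 * Q = 1 := by
      rw [← hRR]
      calc Q * (R * R) * Q = (Q * R) * (R * Q) := by
            rw [Matrix.mul_assoc, Matrix.mul_assoc, Matrix.mul_assoc]
        _ = 1 := by rw [hQR, hRQ, Matrix.one_mul]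
    have key : ∀ i j, |(Q * B * Q) i j - (1 : Matrix (Fin n) (Fin n) ℝ) i j| < θ := by
      intro i j
      have hdiff : (Q * B * Q) i j - (1 : Matrix (Fin n) (Fin n) ℝ) i j
          = (Q * (B - A0) * Q) i j := by
        rw [← hQA, Matrix.mul_sub, Matrix.sub_mul, Matrix.sub_apply]
      rw [hdiff]
      have h1 := triple_entry_bound Q (B - A0) Q i j
      have h2 : (n:ℝ)^2 * (‖Q‖ * ‖B - A0‖ * ‖Q‖) < θ := by
        have hQn : (0:ℝ) ≤ ‖Q‖ := norm_nonneg _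
        have hBn : (0:ℝ) ≤ ‖B - A0‖ := norm_nonneg _
        have step : (n:ℝ)^2 * (‖Q‖ * ‖B - A0‖ * ‖Q‖) ≤ (n:ℝ)^2 * ((‖Q‖+1)^2 * ‖B - A0‖) := by
          have : ‖Q‖ * ‖B - A0‖ * ‖Q‖ ≤ (‖Q‖+1)^2 * ‖B - A0‖ := by nlinarith
          nlinarith [sq_nonneg (n:ℝ)]
        have step2 : (n:ℝ)^2 * ((‖Q‖+1)^2 * ‖B - A0‖) < (n:ℝ)^2 * ((‖Q‖+1)^2 * δ) := by
          have hpos : (0:ℝ) < (n:ℝ)^2 * (‖Q‖+1)^2 := by positivity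
          have := mul_lt_mul_of_pos_left hB hpos
          calc (n:ℝ)^2 * ((‖Q‖+1)^2 * ‖B - A0‖) = (n:ℝ)^2 * (‖Q‖+1)^2 * ‖B - A0‖ := by ring
            _ < (n:ℝ)^2 * (‖Q‖+1)^2 * δ := this
            _ = (n:ℝ)^2 * ((‖Q‖+1)^2 * δ) := by ring
        have step3 : (n:ℝ)^2 * ((‖Q‖+1)^2 * δ) = θ := by
          rw [hδ]
          field_simp
        linarith
      linarith
    have hnppos := hnp p
    have hεθ : θ < ε := by
      rw [hθ, hε]
      rw [div_lt_div_iff₀ (by positivity) (by positivity)]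
      nlinarith
    by_cases h : p.1 = p.2
    · have hkey := key p.1 p.1
      rw [Matrix.one_apply_eq] at hkey
      have hMii : 1 - θ < (Q * B * Q) p.1 p.1 := by
        have := abs_lt.mp hkey
        linarith [this.1]
      have hcoef : 0 < (Q * B * Q) p.1 p.1 - ((n:ℝ) - 1) * ε := by
        have h1n : (1:ℝ) ≤ (n:ℝ) := by exact_mod_cast hn
        have : ((n:ℝ) - 1) * ε ≤ 1/2 := by
          rw [hε, mul_one_div, div_le_div_iff₀ (by positivity) (by norm_num)]
          nlinarith
        have hθhalf : θ < 1/2 := lt_of_lt_of_le hεθ (by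
          rw [hε]; rw [div_le_div_iff₀ (by positivity) (by norm_num)]; nlinarith)
        linarith
      simp only [hα, hγ, if_pos h]
      exact mul_pos hnppos hcoef
    · have hkey := key p.1 p.2
      rw [Matrix.one_apply_ne h] at hkey
      rw [sub_zero] at hkey
      have habs : |sgn p.1 p.2 * (Q * B * Q) p.1 p.2| < θ := by
        rw [abs_mul]
        have : |sgn p.1 p.2| = 1 := by unfold sgn; split <;> norm_num
        rw [this, one_mul]
        exact hkey
      have : 0 < (ε + sgn p.1 p.2 * (Q * B * Q) p.1 p.2) / 2 := by
        have := abs_lt.mp habs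
        have := this.1
        linarith
      simp only [hα, hγ, if_neg h]
      exact mul_pos hnppos this
  · -- the identity
    intro B hBsym
    have hRe : ∀ a b : Fin n, R a b = R b a := by
      intro a b
      conv_lhs => rw [← hRsym]
      exact R.transpose_apply a b
    have hMT : (Q * B * Q)ᵀ = Q * B * Q := by
      calc (Q * B * Q)ᵀ = Qᵀ * (Bᵀ * Qᵀ) := by
            rw [Matrix.transpose_mul, Matrix.transpose_mul]
        _ = Q * B * Q := by rw [hQsym, hBsym, Matrix.mul_assoc]
    have hMsym : ∀ i j, (Q * B * Q) i j = (Q * B * Q) j i := by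
      intro i j
      conv_lhs => rw [← hMT]
      exact (Q * B * Q).transpose_apply i j
    have hRMR : R * (Q * B * Q) * R = B := by
      calc R * (Q * B * Q) * R = (R * Q) * B * (Q * R) := by
            simp only [Matrix.mul_assoc]
        _ = B := by rw [hQR, hRQ, Matrix.one_mul, Matrix.mul_one]
    ext k l
    rw [Matrix.sum_apply]
    have hterm : ∀ p : Fin n × Fin n,
        ((α p B) • Matrix.vecMulVec (u p) (u p)) k l = γ p B * (w p k * w p l) := by
      intro p
      rw [Matrix.smul_apply, Matrix.vecMulVec_apply]
      simp only [hα, hu, Pi.smul_apply, smul_eq_mul]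
      have hs : (Real.sqrt (np p))⁻¹ * (Real.sqrt (np p))⁻¹ = (np p)⁻¹ := by
        rw [← mul_inv]
        congr 1
        exact Real.mul_self_sqrt (hnp p).le
      have : np p * γ p B * ((Real.sqrt (np p))⁻¹ * w p k * ((Real.sqrt (np p))⁻¹ * w p l))
          = (np p * (np p)⁻¹) * (γ p B * (w p k * w p l)) := by
        rw [← hs]; ring
      rw [this, mul_inv_cancel₀ (hnp p).ne', one_mul]
    rw [Finset.sum_congr rfl fun p _ => hterm p]
    rw [Fintype.sum_prod_type]
    have hsummand : ∀ i j : Fin n, γ (i, j) B * (w (i, j) k * w (i, j) l)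
        = (if i = j then ((Q * B * Q) i i - ((n:ℝ) - 1) * ε) * ((fun i => R k i) i * (fun j => R j l) i)
          else ((ε + sgn i j * (Q * B * Q) i j) / 2)
            * (((fun i => R k i) i + sgn i j * (fun i => R k i) j)
              * ((fun j => R j l) i + sgn i j * (fun j => R j l) j))) := by
      intro i j
      by_cases h : i = j
      · subst h
        simp only [hγ, hw, if_pos rfl]
        rw [hRe l i]
        simp
      · simp only [hγ, hw, if_neg h]
        rw [hRe l i, hRe l j]
    rw [Finset.sum_congr rfl fun i _ => Finset.sum_congr rfl fun j _ => hsummand i j]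
    rw [core (Q * B * Q) hMsym ε (fun i => R k i) (fun j => R j l)]
    rw [← triple_apply R (Q * B * Q) R k l, hRMR]

end degenerate



end St17

open St17 Matrix in
/-- decomposition into primitive metrics, cf. (3.16): a uniformly
positive definite smooth symmetric matrix field is a finite sum of rank-one matrices
`ā_i² ν_i ⊗ ν_i` with smooth positive coefficients and unit vectors `ν_i ∈ 𝕊^{n−1}`. -/
theorem statement17 (n : ℕ) (hn : 2 ≤ n) (Ω : Set (Fin n → ℝ))
    (hΩo : IsOpen Ω) (hΩb : Bornology.IsBounded Ω) (hΩne : Ω.Nonempty)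
    (H : (Fin n → ℝ) → Matrix (Fin n) (Fin n) ℝ)
    (hHs : ContDiff ℝ (⊤ : ℕ∞) H)
    (hHsym : ∀ x ∈ closure Ω, (H x).IsSymm)
    (c : ℝ) (hc : 0 < c)
    (hHpd : ∀ x ∈ closure Ω, ∀ v : Fin n → ℝ,
      c * ∑ i, v i ^ 2 ≤ ∑ i, ∑ j, v i * H x i j * v j) :
    ∃ Nstar : ℕ, n * (n + 1) / 2 ≤ Nstar ∧
    ∃ ν : Fin Nstar → (Fin n → ℝ), (∀ k, ∑ i, ν k i ^ 2 = 1) ∧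
    ∃ abar : Fin Nstar → ((Fin n → ℝ) → ℝ),
      (∀ k, ContDiff ℝ (⊤ : ℕ∞) (abar k)) ∧
      (∀ k, ∀ x ∈ closure Ω, 0 < abar k x) ∧
      (∀ x ∈ closure Ω,
        H x = ∑ k, (abar k x) ^ 2 • Matrix.vecMulVec (ν k) (ν k)) := by
  classical
  set S := closure Ω with hS
  have hScpt : IsCompact S := hΩb.isCompact_closure
  have hSclosed : IsClosed S := isClosed_closure
  have hSne : S.Nonempty := hΩne.closure
  -- positive definiteness
  have hPD : ∀ x ∈ S, (H x).PosDef := by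
    intro x hx
    refine Matrix.PosDef.of_dotProduct_mulVec_pos ?_ ?_
    · rw [Matrix.IsHermitian, Matrix.conjTranspose_eq_transpose_of_trivial]
      exact hHsym x hx
    · intro v hv
      have h1 : star v ⬝ᵥ (H x) *ᵥ v = ∑ i, ∑ j, v i * H x i j * v j := by
        simp [dotProduct, Matrix.mulVec, Finset.mul_sum]
        exact Finset.sum_congr rfl fun i _ => Finset.sum_congr rfl fun j _ => by ring
      rw [h1]
      have h2 : 0 < ∑ i, v i ^ 2 := by
        obtain ⟨i, hi⟩ : ∃ i, v i ≠ 0 := by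
          by_contra h; push_neg at h; exact hv (funext h)
        exact Finset.sum_pos' (fun i _ => sq_nonneg _) ⟨i, Finset.mem_univ i, by positivity⟩
      calc (0:ℝ) < c * ∑ i, v i ^ 2 := by positivity
        _ ≤ _ := hHpd x hx v
  -- local decompositions
  have hloc : ∀ z : S, ∃ (u : Fin n × Fin n → (Fin n → ℝ)) (δ : ℝ)
      (α : (Fin n × Fin n) → Matrix (Fin n) (Fin n) ℝ → ℝ),
      0 < δ ∧ (∀ p, ∑ i, (u p i)^2 = 1) ∧
      (∀ p, ContDiff ℝ (⊤:ℕ∞) (α p)) ∧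
      (∀ p B, ‖B - H z.1‖ < δ → 0 < α p B) ∧
      (∀ B : Matrix (Fin n) (Fin n) ℝ, Bᵀ = B →
        ∑ p : Fin n × Fin n, (α p B) • Matrix.vecMulVec (u p) (u p) = B) :=
    fun z => local_decomp n (by omega) (H z.1) (hPD z.1 z.2)
  choose u δ α hδpos hunit hαsmooth hαpos hαid using hloc
  -- open cover
  set U : S → Set (Fin n → ℝ) := fun z => H ⁻¹' Metric.ball (H z.1) (δ z / 2) with hU
  have hUopen : ∀ z, IsOpen (U z) := fun z =>
    Metric.isOpen_ball.preimage hHs.continuous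
  have hUcover : S ⊆ ⋃ z : S, U z := by
    intro x hx
    exact Set.mem_iUnion.mpr ⟨⟨x, hx⟩, by
      simp [hU, Metric.mem_ball, half_pos (hδpos ⟨x, hx⟩)]⟩
  obtain ⟨t, ht⟩ := hScpt.elim_finite_subcover U hUopen hUcover
  have htne : t.Nonempty := by
    obtain ⟨x0, hx0⟩ := hSne
    have := ht hx0
    rw [Set.mem_iUnion₂] at this
    obtain ⟨z, hz, -⟩ := this
    exact ⟨z, hz⟩
  -- partition of unity
  have hcov2 : S ⊆ ⋃ m : t, U m.1 := by
    intro x hx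
    have := ht hx
    rw [Set.mem_iUnion₂] at this
    obtain ⟨z, hz, hmem⟩ := this
    exact Set.mem_iUnion.mpr ⟨⟨z, hz⟩, hmem⟩
  obtain ⟨f, hf⟩ := SmoothPartitionOfUnity.exists_isSubordinate
    (I := modelWithCornersSelf ℝ (Fin n → ℝ)) hSclosed (fun m : t => U m.1)
    (fun m => hUopen m.1) hcov2
  -- the matrix E
  set E : Matrix (Fin n) (Fin n) ℝ :=
    ∑ m : t, ∑ p : Fin n × Fin n, Matrix.vecMulVec (u m.1 p) (u m.1 p) with hE
  have hEsym : Eᵀ = E := by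
    rw [hE]
    rw [Matrix.transpose_sum]
    refine Finset.sum_congr rfl fun m _ => ?_
    rw [Matrix.transpose_sum]
    refine Finset.sum_congr rfl fun p _ => ?_
    ext a b
    simp [Matrix.vecMulVec_apply, mul_comm]
  -- choice of η
  set η : ℝ := (t.inf' htne fun m => δ m) / (2 * (‖E‖ + 1)) with hη
  have hinfpos : 0 < t.inf' htne fun m => δ m := by
    rw [Finset.lt_inf'_iff]
    exact fun m _ => hδpos m
  have hηpos : 0 < η := by
    rw [hη]; positivity
  have hηE : ∀ m : t, η * ‖E‖ ≤ δ m / 2 := by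
    intro m
    have h1 : η * ‖E‖ ≤ η * (‖E‖ + 1) := by nlinarith [hηpos]
    have h2 : η * (‖E‖ + 1) = (t.inf' htne fun m => δ m) / 2 := by
      rw [hη]
      field_simp
    have h3 : (t.inf' htne fun m => δ m) ≤ δ m := Finset.inf'_le _ m.2
    linarith
  -- shifted field
  set G : (Fin n → ℝ) → Matrix (Fin n) (Fin n) ℝ := fun x => H x - η • E with hG
  have hGsmooth : ContDiff ℝ (⊤:ℕ∞) G := hHs.sub contDiff_const
  have hGsym : ∀ x ∈ S, (G x)ᵀ = G x := by
    intro x hx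
    rw [hG]
    simp only [Matrix.transpose_sub, Matrix.transpose_smul, hEsym]
    rw [hHsym x hx]
  have hGball : ∀ (m : t) (x : (Fin n → ℝ)), x ∈ tsupport (f m) → ‖G x - H m.1.1‖ < δ m := by
    intro m x hx
    have hxU : x ∈ U m.1 := hf m hx
    have h1 : ‖H x - H m.1.1‖ < δ m / 2 := by
      have := hxU
      simp only [hU, Set.mem_preimage, Metric.mem_ball, dist_eq_norm] at this
      exact this
    have h2 : ‖G x - H m.1.1‖ ≤ ‖H x - H m.1.1‖ + ‖η • E‖ := by
      have : G x - H m.1.1 = (H x - H m.1.1) + (-(η • E)) := by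
        rw [hG]; show H x - η • E - H m.1.1 = _; rw [sub_right_comm, sub_eq_add_neg]
      rw [this]
      calc ‖(H x - H m.1.1) + (-(η • E))‖ ≤ ‖H x - H m.1.1‖ + ‖-(η • E)‖ := norm_add_le _ _
        _ = ‖H x - H m.1.1‖ + ‖η • E‖ := by rw [norm_neg]
    have h3 : ‖η • E‖ = η * ‖E‖ := by
      rw [norm_smul, Real.norm_eq_abs, abs_of_pos hηpos]
    have := hηE m
    linarith
  -- coefficients
  set q : (t × (Fin n × Fin n)) → (Fin n → ℝ) → ℝ :=
    fun mp x => f mp.1 x * α mp.1.1 mp.2 (G x) with hq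
  have hqnonneg : ∀ mp x, 0 ≤ q mp x := by
    intro mp x
    by_cases hx : x ∈ tsupport (f mp.1)
    · exact mul_nonneg (f.nonneg mp.1 x) (hαpos mp.1.1 mp.2 (G x) (hGball mp.1 x hx)).le
    · rw [hq]
      simp only []
      rw [image_eq_zero_of_notMem_tsupport hx, zero_mul]
  have hqsmooth : ∀ mp, ContDiff ℝ (⊤:ℕ∞) (q mp) := by
    intro mp
    refine ContDiff.mul ?_ ((hαsmooth mp.1.1 mp.2).comp hGsmooth)
    exact contMDiff_iff_contDiff.mp (f mp.1).contMDiff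
  -- final data
  refine ⟨Fintype.card (↥t × (Fin n × Fin n)), ?_, ?_⟩
  · have h1 : Fintype.card (↥t × (Fin n × Fin n)) = t.card * (n * n) := by
      rw [Fintype.card_prod, Fintype.card_prod, Fintype.card_coe, Fintype.card_fin]
    have h2 : n * (n + 1) / 2 ≤ n * n := by
      have : n * (n + 1) ≤ (n * n) * 2 := by nlinarith
      exact Nat.div_le_of_le_mul (by omega)
    have h3 : 1 ≤ t.card := Finset.card_pos.mpr htne
    calc n * (n + 1) / 2 ≤ n * n := h2
      _ ≤ t.card * (n * n) := Nat.le_mul_of_pos_left _ (by omega)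
      _ = Fintype.card (↥t × (Fin n × Fin n)) := h1.symm
  set e : Fin (Fintype.card (↥t × (Fin n × Fin n))) ≃ (↥t × (Fin n × Fin n)) :=
    (Fintype.equivFin (↥t × (Fin n × Fin n))).symm with he
  refine ⟨fun k => u (e k).1.1 (e k).2, fun k => hunit (e k).1.1 (e k).2, ?_⟩
  refine ⟨fun k x => Real.sqrt (q (e k) x + η), ?_, ?_, ?_⟩
  · intro k
    refine ContDiff.sqrt ((hqsmooth (e k)).add contDiff_const) ?_
    intro x
    have h0 := hqnonneg (e k) x
    have : (0:ℝ) < q (e k) x + η := by linarith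
    exact this.ne'
  · intro k x hx
    rw [Real.sqrt_pos]
    have h0 := hqnonneg (e k) x
    linarith
  · intro x hx
    have key : ∑ mp : ↥t × (Fin n × Fin n),
        (q mp x + η) • Matrix.vecMulVec (u mp.1.1 mp.2) (u mp.1.1 mp.2) = H x := by
      have split1 : ∀ mp : ↥t × (Fin n × Fin n),
          (q mp x + η) • Matrix.vecMulVec (u mp.1.1 mp.2) (u mp.1.1 mp.2)
          = (q mp x) • Matrix.vecMulVec (u mp.1.1 mp.2) (u mp.1.1 mp.2)
            + η • Matrix.vecMulVec (u mp.1.1 mp.2) (u mp.1.1 mp.2) := fun mp => add_smul _ _ _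
      rw [Finset.sum_congr rfl fun mp _ => split1 mp, Finset.sum_add_distrib]
      have part2 : ∑ mp : ↥t × (Fin n × Fin n),
          η • Matrix.vecMulVec (u mp.1.1 mp.2) (u mp.1.1 mp.2) = η • E := by
        rw [← Finset.smul_sum, hE, Fintype.sum_prod_type]
      have part1 : ∑ mp : ↥t × (Fin n × Fin n),
          (q mp x) • Matrix.vecMulVec (u mp.1.1 mp.2) (u mp.1.1 mp.2) = G x := by
        rw [Fintype.sum_prod_type]
        have inner : ∀ m : ↥t, ∑ p : Fin n × Fin n,
            (q (m, p) x) • Matrix.vecMulVec (u m.1 p) (u m.1 p) = (f m x) • G x := by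
          intro m
          have : ∀ p : Fin n × Fin n,
              (q (m, p) x) • Matrix.vecMulVec (u m.1 p) (u m.1 p)
              = (f m x) • ((α m.1 p (G x)) • Matrix.vecMulVec (u m.1 p) (u m.1 p)) := by
            intro p
            rw [hq]
            simp only []
            rw [smul_smul]
          rw [Finset.sum_congr rfl fun p _ => this p, ← Finset.smul_sum]
          rw [hαid m.1 (G x) (hGsym x hx)]
        rw [Finset.sum_congr rfl fun m _ => inner m, ← Finset.sum_smul]
        have hsum1 : ∑ m : ↥t, f m x = 1 := by
          have := f.sum_eq_one hx
          rwa [finsum_eq_sum_of_fintype] at this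
        rw [hsum1, one_smul]
      rw [part1, part2, hG]
      simp only []
      abel
    have h1 : ∀ k : Fin (Fintype.card (↥t × (Fin n × Fin n))),
        (Real.sqrt (q (e k) x + η))^2 • Matrix.vecMulVec (u (e k).1.1 (e k).2) (u (e k).1.1 (e k).2)
        = (q (e k) x + η) • Matrix.vecMulVec (u (e k).1.1 (e k).2) (u (e k).1.1 (e k).2) := by
      intro k
      rw [Real.sq_sqrt (by linarith [hqnonneg (e k) x])]
    calc H x = ∑ mp : ↥t × (Fin n × Fin n),
          (q mp x + η) • Matrix.vecMulVec (u mp.1.1 mp.2) (u mp.1.1 mp.2) := key.symm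
      _ = ∑ k : Fin (Fintype.card (↥t × (Fin n × Fin n))),
          (q (e k) x + η) • Matrix.vecMulVec (u (e k).1.1 (e k).2) (u (e k).1.1 (e k).2) :=
        (Fintype.sum_equiv e _ _ (fun k => rfl)).symm
      _ = ∑ k : Fin (Fintype.card (↥t × (Fin n × Fin n))),
          (Real.sqrt (q (e k) x + η))^2
            • Matrix.vecMulVec (u (e k).1.1 (e k).2) (u (e k).1.1 (e k).2) :=
        (Finset.sum_congr rfl fun k _ => h1 k).symm
end
end
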